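/- arXiv:2411.18284 — 3 statements merged into one kernel-verified Lean document; each statement's English description precedes it below -/
import Mathlib

section
/- Let V be a 1-varifold on ℝ² with finite weight ‖V‖(ℝ²) < ∞ and bounded first variation ‖δV‖(ℝ²) < ∞. Then the density-ratio supremum satisfies 𝔇(‖V‖) ≤ ‖δV‖(ℝ²), where 𝔇(‖V‖) := sup{ ‖V‖(B_r(x))/r : x ∈ ℝ², r > 0 }. -/
open MeasureTheory Metric Filter
open scoped ENNReal RealInnerProductSpace BigOperators

noncomputable section

/-- Points of the plane. -/
abbrev E2 := EuclideanSpace ℝ (Fin 2)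

/-- 2×2 real matrices; elements of G(2,1) are identified with rank-one orthogonal
projection matrices. -/
abbrev Mat2 := Fin 2 → Fin 2 → ℝ

/-- `S` is the orthogonal projection matrix onto a 1-dimensional subspace of ℝ²:
idempotent, symmetric, of trace one. -/
def IsProj1 (S : Mat2) : Prop :=
  (∀ i j, (∑ k : Fin 2, S i k * S k j) = S i j) ∧ (∀ i j, S i j = S j i) ∧
    (∑ i : Fin 2, S i i) = 1

/-- The weight measure ‖V‖ of a varifold `V`. -/
def VarWeight (V : Measure (E2 × Mat2)) : Measure E2 := V.map Prod.fst

/-- `g` belongs to C¹_c(ℝ²;ℝ²). -/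
def C1c (g : E2 → E2) : Prop := ContDiff ℝ 1 g ∧ HasCompactSupport g

/-- The first variation δV(g) = ∫ ∇g(x)·S dV(x,S). -/
def firstVariation (V : Measure (E2 × Mat2)) (g : E2 → E2) : ℝ :=
  ∫ p, (∑ i : Fin 2, ∑ j : Fin 2,
    fderiv ℝ g p.1 (EuclideanSpace.single j (1 : ℝ)) i * p.2 i j) ∂V

/-- The set of values δV(g) over C¹_c vector fields with |g| ≤ 1. -/
def fvSet (V : Measure (E2 × Mat2)) : Set ℝ :=
  {r | ∃ g : E2 → E2, C1c g ∧ (∀ x, ‖g x‖ ≤ 1) ∧ r = firstVariation V g}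

/-- The total first-variation mass ‖δV‖(ℝ²). -/
def deltaNorm (V : Measure (E2 × Mat2)) : ℝ := sSup (fvSet V)

/-- The set of density ratios μ(B_r(x))/r. -/
def ratioSet (μ : Measure E2) : Set ℝ :=
  {q | ∃ (x : E2) (r : ℝ), 0 < r ∧ q = (μ (ball x r)).toReal / r}

/-- The density-ratio supremum 𝔇(μ) = sup_{B_r(x)} μ(B_r(x))/r. -/
def Dsup (μ : Measure E2) : ℝ := sSup (ratioSet μ)

/-!
Test the first variation against the radial field `g y = η (|y - x|²) • (y - x)`, a smoothed and
truncated version of `(y - x) / max ρ |y - x|`. Since `S` projects onto a line,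
`∇g · S = η + 2 η' ⟨w, S w⟩` with `0 ≤ ⟨w, S w⟩ ≤ |w|²` for `w = y - x`; where `η' ≤ 0` this is at
least `η + 2 |w|² η'`, the derivative of `t ↦ t η(t²)` at `t = |w|`, which is about `1/ρ` on
`B_ρ(x)` and nonnegative elsewhere. Hence `‖V‖(B_r(x)) / ρ ≲ δV(g) + O(1/L) ‖V‖(ℝ²)` for the
truncation radius `L`, and `δV(g) ≤ ‖δV‖(ℝ²)` as `|g| ≤ 1`; let `L → ∞`, the smoothing parameter
`n → ∞`, and `ρ ↓ r`.
-/

namespace IsProj1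

variable {S : Mat2}

lemma entries (hS : IsProj1 S) :
    S 0 1 = S 1 0 ∧ S 0 0 ^ 2 + S 1 0 ^ 2 = S 0 0 ∧ S 1 0 ^ 2 + S 1 1 ^ 2 = S 1 1 ∧
      S 0 0 + S 1 1 = 1 := by
  obtain ⟨hid, hsym, htr⟩ := hS
  have h00 := hid 0 0
  have h11 := hid 1 1
  simp only [Fin.sum_univ_two] at h00 h11 htr
  rw [hsym 0 1] at h00 h11
  exact ⟨hsym 0 1, by linear_combination h00, by linear_combination h11, htr⟩

lemma trace_eq_one (hS : IsProj1 S) : ∑ i, S i i = 1 := hS.2.2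

/- For the projection `S` onto a line, `wᵀ S w = |S w|²` and `|w|² - wᵀ S w = |(1 - S) w|²`. -/
lemma quadForm_nonneg (hS : IsProj1 S) (w : Fin 2 → ℝ) : 0 ≤ ∑ i, ∑ j, w i * w j * S i j := by
  obtain ⟨h01, h00, h11, htr⟩ := hS.entries
  have hsq : ∑ i, ∑ j, w i * w j * S i j =
      (S 0 0 * w 0 + S 1 0 * w 1) ^ 2 + (S 1 0 * w 0 + S 1 1 * w 1) ^ 2 := by
    simp only [Fin.sum_univ_two, h01]
    linear_combination (-w 0 ^ 2) * h00 - w 1 ^ 2 * h11 - 2 * S 1 0 * w 0 * w 1 * htr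
  rw [hsq]
  positivity

lemma quadForm_le (hS : IsProj1 S) (w : Fin 2 → ℝ) :
    ∑ i, ∑ j, w i * w j * S i j ≤ ∑ i, w i ^ 2 := by
  obtain ⟨h01, h00, h11, htr⟩ := hS.entries
  have hsq : ∑ i, w i ^ 2 - ∑ i, ∑ j, w i * w j * S i j =
      (S 1 0 * w 0 - S 0 0 * w 1) ^ 2 + (S 1 1 * w 0 - S 1 0 * w 1) ^ 2 := by
    simp only [Fin.sum_univ_two, h01]
    linear_combination (-w 1 ^ 2) * h00 - w 0 ^ 2 * h11 -
      (w 0 ^ 2 + w 1 ^ 2 - 2 * S 1 0 * w 0 * w 1) * htr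
  nlinarith [sq_nonneg (S 1 0 * w 0 - S 0 0 * w 1), sq_nonneg (S 1 1 * w 0 - S 1 0 * w 1)]

lemma abs_apply_le_one (hS : IsProj1 S) (i j : Fin 2) : |S i j| ≤ 1 := by
  obtain ⟨h01, h00, h11, htr⟩ := hS.entries
  fin_cases i <;> fin_cases j <;> simp only [Fin.zero_eta, Fin.mk_one, h01, abs_le] <;>
    constructor <;> nlinarith [sq_nonneg (S 1 0), sq_nonneg (S 0 0 - 1 / 2)]

end IsProj1

namespace VarifoldDensity

open Real Topology

def cutoff (t : ℝ) : ℝ := smoothTransition (2 - t)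

lemma contDiff_cutoff : ContDiff ℝ 1 cutoff :=
  smoothTransition.contDiff.comp (contDiff_const.sub contDiff_id)

lemma cutoff_of_le_one {t : ℝ} (ht : t ≤ 1) : cutoff t = 1 :=
  smoothTransition.one_of_one_le (by linarith)

lemma cutoff_of_two_le {t : ℝ} (ht : 2 ≤ t) : cutoff t = 0 :=
  smoothTransition.zero_of_nonpos (by linarith)

lemma cutoff_nonneg (t : ℝ) : 0 ≤ cutoff t := smoothTransition.nonneg _

lemma cutoff_le_one (t : ℝ) : cutoff t ≤ 1 := smoothTransition.le_one _

lemma hasDerivAt_cutoff (t : ℝ) : HasDerivAt cutoff (deriv cutoff t) t :=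
  (contDiff_cutoff.differentiable one_ne_zero t).hasDerivAt

lemma deriv_cutoff_eq_zero {t : ℝ} (ht : t < 1 ∨ 2 < t) : deriv cutoff t = 0 := by
  have hconst : ∃ c : ℝ, cutoff =ᶠ[𝓝 t] fun _ => c := by
    rcases ht with ht | ht
    · exact ⟨1, eventually_of_mem (Iio_mem_nhds ht) fun s hs => cutoff_of_le_one hs.le⟩
    · exact ⟨0, eventually_of_mem (Ioi_mem_nhds ht) fun s hs => cutoff_of_two_le hs.le⟩
  obtain ⟨c, hc⟩ := hconst
  rw [hc.deriv_eq, deriv_const]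

lemma exists_abs_deriv_cutoff_le : ∃ C : ℝ, ∀ t, |deriv cutoff t| ≤ C := by
  have hsupp : HasCompactSupport (deriv cutoff) :=
    HasCompactSupport.intro isCompact_Icc fun t ht => deriv_cutoff_eq_zero <| by
      simpa only [Set.mem_Icc, not_and_or, not_le] using ht
  obtain ⟨C, hC⟩ := (contDiff_cutoff.continuous_deriv le_rfl).bounded_above_of_compact_support hsupp
  exact ⟨C, fun t => by simpa using hC t⟩

/- `theta ρ n` is a smooth approximation of `u ↦ min (1/ρ) u^(-1/2)` on `[0, ∞)`, to which it
converges as `n → ∞`; so `t * theta ρ n (t^2)` smooths the radial profile `min (t/ρ) 1`.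
`thetaDiv` is the closed form of `θ + 2 u θ'`, the derivative of that profile at `t = √u`. -/

def thetaExp (n : ℕ) : ℝ := -1 / (4 * n)

def thetaBase (ρ : ℝ) (n : ℕ) (u : ℝ) : ℝ := ρ ^ (4 * n) + u ^ (2 * n)

def theta (ρ : ℝ) (n : ℕ) (u : ℝ) : ℝ := thetaBase ρ n u ^ thetaExp n

def thetaDeriv (ρ : ℝ) (n : ℕ) (u : ℝ) : ℝ :=
  thetaExp n * ((2 * n : ℕ) * u ^ (2 * n - 1)) * thetaBase ρ n u ^ (thetaExp n - 1)

def thetaDiv (ρ : ℝ) (n : ℕ) (u : ℝ) : ℝ := ρ ^ (4 * n) * thetaBase ρ n u ^ (thetaExp n - 1)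

section Theta

variable {ρ : ℝ} {n : ℕ}

lemma thetaExp_neg (hn : n ≠ 0) : thetaExp n < 0 := by
  have : (0 : ℝ) < n := by positivity
  unfold thetaExp
  exact div_neg_of_neg_of_pos (by norm_num) (by positivity)

lemma natCast_mul_thetaExp (hn : n ≠ 0) {k : ℕ} : (k * n : ℕ) * thetaExp n = -(k / 4) := by
  have : (n : ℝ) ≠ 0 := by exact_mod_cast hn
  unfold thetaExp
  push_cast
  field_simp

lemma thetaBase_pos (hρ : 0 < ρ) (u : ℝ) : 0 < thetaBase ρ n u := by
  have : 0 ≤ u ^ (2 * n) := by rw [pow_mul]; positivity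
  unfold thetaBase
  positivity

lemma theta_pos (hρ : 0 < ρ) (u : ℝ) : 0 < theta ρ n u :=
  rpow_pos_of_pos (thetaBase_pos hρ u) _

lemma hasDerivAt_theta (hρ : 0 < ρ) (u : ℝ) : HasDerivAt (theta ρ n) (thetaDeriv ρ n u) u := by
  have hbase : HasDerivAt (thetaBase ρ n) ((2 * n : ℕ) * u ^ (2 * n - 1)) u :=
    (hasDerivAt_pow (2 * n) u).const_add _
  show HasDerivAt (fun y => thetaBase ρ n y ^ thetaExp n) _ u
  convert hbase.rpow_const (p := thetaExp n) (Or.inl (thetaBase_pos hρ u).ne') using 1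
  unfold thetaDeriv
  ring

lemma contDiff_theta (hρ : 0 < ρ) : ContDiff ℝ 1 (theta ρ n) :=
  (contDiff_const.add (contDiff_id.pow _)).rpow_const_of_ne fun u => (thetaBase_pos hρ u).ne'

lemma thetaDeriv_nonpos (hρ : 0 < ρ) (hn : n ≠ 0) {u : ℝ} (hu : 0 ≤ u) : thetaDeriv ρ n u ≤ 0 :=
  mul_nonpos_of_nonpos_of_nonneg
    (mul_nonpos_of_nonpos_of_nonneg (thetaExp_neg hn).le (by positivity))
    (rpow_nonneg (thetaBase_pos hρ u).le _)

lemma theta_add_two_mul_thetaDeriv (hρ : 0 < ρ) (hn : n ≠ 0) (u : ℝ) :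
    theta ρ n u + 2 * u * thetaDeriv ρ n u = thetaDiv ρ n u := by
  have hb := thetaBase_pos (n := n) hρ u
  have htheta : theta ρ n u = thetaBase ρ n u * thetaBase ρ n u ^ (thetaExp n - 1) := by
    rw [theta, rpow_sub hb, rpow_one]
    field_simp
  have hpow : u * u ^ (2 * n - 1) = u ^ (2 * n) := by
    rw [← pow_succ']
    congr 1
    omega
  have hexp := natCast_mul_thetaExp hn (k := 2)
  calc theta ρ n u + 2 * u * thetaDeriv ρ n u
      = (thetaBase ρ n u + 2 * ((2 * n : ℕ) * thetaExp n) * (u * u ^ (2 * n - 1)))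
          * thetaBase ρ n u ^ (thetaExp n - 1) := by
        rw [htheta, thetaDeriv]; ring
    _ = thetaDiv ρ n u := by
        rw [hexp, hpow, thetaDiv, thetaBase]; ring

lemma thetaDiv_nonneg (hρ : 0 < ρ) (u : ℝ) : 0 ≤ thetaDiv ρ n u :=
  mul_nonneg (by positivity) (rpow_nonneg (thetaBase_pos hρ u).le _)

lemma thetaDiv_antitoneOn (hρ : 0 < ρ) (hn : n ≠ 0) : AntitoneOn (thetaDiv ρ n) (Set.Ici 0) := by
  intro u hu v _ huv
  refine mul_le_mul_of_nonneg_left ?_ (by positivity)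
  refine rpow_le_rpow_of_nonpos (thetaBase_pos hρ u) ?_ (by linarith [thetaExp_neg hn])
  unfold thetaBase
  gcongr

lemma mul_theta_sq_le_one (hρ : 0 < ρ) (hn : n ≠ 0) {t : ℝ} (ht : 0 ≤ t) :
    t * theta ρ n (t ^ 2) ≤ 1 := by
  rcases ht.eq_or_lt with rfl | ht
  · simp
  have hle : theta ρ n (t ^ 2) ≤ (t ^ (4 * n)) ^ thetaExp n := by
    refine rpow_le_rpow_of_nonpos (by positivity) ?_ (thetaExp_neg hn).le
    rw [thetaBase, ← pow_mul, show 2 * (2 * n) = 4 * n by ring]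
    linarith [pow_pos hρ (4 * n)]
  have hpow : (t ^ (4 * n)) ^ thetaExp n = t⁻¹ := by
    rw [← rpow_natCast, ← rpow_mul ht.le, natCast_mul_thetaExp hn (k := 4)]
    norm_num [rpow_neg_one]
  calc t * theta ρ n (t ^ 2) ≤ t * t⁻¹ := by rw [← hpow]; gcongr
    _ = 1 := mul_inv_cancel₀ ht.ne'

lemma theta_le_inv (hρ : 0 < ρ) (hn : n ≠ 0) {L u : ℝ} (hL : 0 < L) (hu : L ^ 2 ≤ u) :
    theta ρ n u ≤ 1 / L := by
  have hsqrt : L ≤ √u := le_sqrt_of_sq_le hu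
  have h := mul_theta_sq_le_one hρ hn (sqrt_nonneg u)
  rw [sq_sqrt ((sq_nonneg L).trans hu)] at h
  calc theta ρ n u ≤ 1 / √u := (le_div_iff₀' (hL.trans_le hsqrt)).2 h
    _ ≤ 1 / L := one_div_le_one_div_of_le hL hsqrt

lemma thetaDiv_eq (hρ : 0 < ρ) (hn : n ≠ 0) (u : ℝ) :
    thetaDiv ρ n u = ρ⁻¹ * (1 + (u / ρ ^ 2) ^ (2 * n)) ^ (thetaExp n - 1) := by
  have hρ4 : (0 : ℝ) < ρ ^ (4 * n) := by positivity
  have hsplit : thetaBase ρ n u = ρ ^ (4 * n) * (1 + (u / ρ ^ 2) ^ (2 * n)) := by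
    rw [thetaBase, div_pow, ← pow_mul, show 2 * (2 * n) = 4 * n by ring]
    field_simp
  have hpow : ρ ^ (4 * n) * (ρ ^ (4 * n)) ^ (thetaExp n - 1) = ρ⁻¹ := by
    rw [← rpow_one_add' hρ4.le (by simpa using (thetaExp_neg hn).ne), add_sub_cancel,
      ← rpow_natCast, ← rpow_mul hρ.le, natCast_mul_thetaExp hn (k := 4)]
    norm_num [rpow_neg_one]
  have hu' : 0 ≤ (u / ρ ^ 2) ^ (2 * n) := by rw [pow_mul]; positivity
  rw [thetaDiv, hsplit, mul_rpow hρ4.le (by linarith), ← mul_assoc, hpow]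

lemma tendsto_thetaDiv (hρ : 0 < ρ) {u : ℝ} (hu : 0 ≤ u) (huρ : u < ρ ^ 2) :
    Tendsto (fun n => thetaDiv ρ n u) atTop (𝓝 ρ⁻¹) := by
  have hratio : u / ρ ^ 2 < 1 := (div_lt_one (by positivity)).2 huρ
  have hsmall : Tendsto (fun n : ℕ => (u / ρ ^ 2) ^ (2 * n)) atTop (𝓝 0) :=
    (tendsto_pow_atTop_nhds_zero_of_lt_one (by positivity) hratio).comp
      (tendsto_id.const_mul_atTop' two_pos)
  have hexp : Tendsto (fun n => thetaExp n - 1) atTop (𝓝 (0 - 1)) := by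
    refine (tendsto_const_div_atTop_nhds_zero_nat (-1 / 4)).congr (fun n => ?_) |>.sub_const 1
    rw [thetaExp, div_div]
  have hlim := ((hsmall.const_add 1).rpow hexp (by norm_num)).const_mul ρ⁻¹
  rw [add_zero, one_rpow, mul_one] at hlim
  refine hlim.congr' ?_
  filter_upwards [eventually_ne_atTop 0] with n hn
  rw [thetaDiv_eq hρ hn]

end Theta

def eta (ρ : ℝ) (n : ℕ) (L u : ℝ) : ℝ := theta ρ n u * cutoff (u / L ^ 2)

def etaDeriv (ρ : ℝ) (n : ℕ) (L u : ℝ) : ℝ :=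
  thetaDeriv ρ n u * cutoff (u / L ^ 2) + theta ρ n u * (deriv cutoff (u / L ^ 2) / L ^ 2)

section Eta

variable {ρ : ℝ} {n : ℕ} {L : ℝ}

lemma hasDerivAt_eta (hρ : 0 < ρ) (u : ℝ) : HasDerivAt (eta ρ n L) (etaDeriv ρ n L u) u := by
  have hχ : HasDerivAt (fun v => cutoff (v / L ^ 2)) (deriv cutoff (u / L ^ 2) / L ^ 2) u := by
    simpa [div_eq_mul_inv, Function.comp_def] using
      (hasDerivAt_cutoff (u / L ^ 2)).comp u ((hasDerivAt_id u).div_const (L ^ 2))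
  exact (hasDerivAt_theta hρ u).mul hχ

lemma contDiff_eta (hρ : 0 < ρ) : ContDiff ℝ 1 (eta ρ n L) :=
  (contDiff_theta hρ).mul (contDiff_cutoff.comp (contDiff_id.div_const _))

lemma eta_nonneg (hρ : 0 < ρ) (u : ℝ) : 0 ≤ eta ρ n L u :=
  mul_nonneg (theta_pos hρ u).le (cutoff_nonneg _)

lemma eta_le_theta (hρ : 0 < ρ) (u : ℝ) : eta ρ n L u ≤ theta ρ n u :=
  mul_le_of_le_one_right (theta_pos hρ u).le (cutoff_le_one _)

lemma eta_eq_zero (hL : 0 < L) {u : ℝ} (hu : 2 * L ^ 2 ≤ u) : eta ρ n L u = 0 := by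
  rw [eta, cutoff_of_two_le ((le_div_iff₀ (by positivity)).2 hu), mul_zero]

lemma thetaDiv_le_eta_add (hρ : 0 < ρ) (hn : n ≠ 0) (hL : 0 < L) {u q : ℝ} (huL : u < L ^ 2)
    (hq : 0 ≤ q) (hqu : q ≤ u) :
    thetaDiv ρ n u ≤ eta ρ n L u + 2 * etaDeriv ρ n L u * q := by
  have ht : u / L ^ 2 < 1 := (div_lt_one (by positivity)).2 huL
  have hD := thetaDeriv_nonpos hρ hn (hq.trans hqu)
  rw [eta, etaDeriv, cutoff_of_le_one ht.le, deriv_cutoff_eq_zero (Or.inl ht),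
    ← theta_add_two_mul_thetaDeriv hρ hn]
  simp only [mul_one, zero_div, mul_zero, add_zero]
  nlinarith [mul_le_mul_of_nonpos_left hqu hD]

lemma two_mul_theta_mul_abs_deriv_cutoff_le (hρ : 0 < ρ) (hn : n ≠ 0) (hL : 0 < L) {C : ℝ}
    (hC : ∀ t, |deriv cutoff t| ≤ C) (u : ℝ) :
    2 * (u / L ^ 2) * theta ρ n u * |deriv cutoff (u / L ^ 2)| ≤ 4 * C / L := by
  have hC0 : 0 ≤ C := (abs_nonneg _).trans (hC 0)
  by_cases hmid : 1 ≤ u / L ^ 2 ∧ u / L ^ 2 ≤ 2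
  · have hLu : L ^ 2 ≤ u := by simpa using (le_div_iff₀ (by positivity)).1 hmid.1
    calc 2 * (u / L ^ 2) * theta ρ n u * |deriv cutoff (u / L ^ 2)| ≤ 2 * 2 * (1 / L) * C := by
          gcongr
          · exact (theta_pos hρ u).le
          · exact hmid.2
          · exact theta_le_inv hρ hn hL hLu
          · exact hC _
      _ = 4 * C / L := by ring
  · rw [deriv_cutoff_eq_zero (by by_contra! h; exact hmid h), abs_zero, mul_zero]
    positivity

lemma neg_le_eta_add (hρ : 0 < ρ) (hn : n ≠ 0) (hL : 0 < L) {C : ℝ}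
    (hC : ∀ t, |deriv cutoff t| ≤ C) {u q : ℝ} (hq : 0 ≤ q) (hqu : q ≤ u) :
    -(4 * C / L) ≤ eta ρ n L u + 2 * etaDeriv ρ n L u * q := by
  set t := u / L ^ 2
  set θ := theta ρ n u
  set χ' := deriv cutoff t
  have herr := two_mul_theta_mul_abs_deriv_cutoff_le hρ hn hL hC u
  have hmain : 0 ≤ cutoff t * (θ + 2 * u * thetaDeriv ρ n u) := by
    rw [theta_add_two_mul_thetaDeriv hρ hn]
    exact mul_nonneg (cutoff_nonneg t) (thetaDiv_nonneg hρ u)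
  have hθ' : thetaDeriv ρ n u * cutoff t * u ≤ thetaDeriv ρ n u * cutoff t * q :=
    mul_le_mul_of_nonpos_left hqu
      (mul_nonpos_of_nonpos_of_nonneg (thetaDeriv_nonpos hρ hn (hq.trans hqu)) (cutoff_nonneg t))
  have hχ' : -(2 * t * θ * |χ'|) ≤ 2 * (θ * χ' * q) / L ^ 2 := by
    have hθ := theta_pos (n := n) hρ u
    have hsum : 0 ≤ χ' + |χ'| := by linarith [neg_abs_le χ']
    have hle : -(θ * |χ'| * u) ≤ θ * χ' * q := by
      nlinarith [mul_le_mul_of_nonneg_left hqu (mul_nonneg hθ.le (abs_nonneg χ')),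
        mul_nonneg (mul_nonneg hθ.le hq) hsum]
    calc -(2 * t * θ * |χ'|) = 2 * -(θ * |χ'| * u) / L ^ 2 := by simp only [t]; ring
      _ ≤ 2 * (θ * χ' * q) / L ^ 2 := by gcongr
  have hexpand : eta ρ n L u + 2 * etaDeriv ρ n L u * q =
      cutoff t * θ + 2 * (thetaDeriv ρ n u * cutoff t * q) + 2 * (θ * χ' * q) / L ^ 2 := by
    simp only [eta, etaDeriv, t, θ, χ']; ring
  rw [hexpand]
  linarith

end Eta

section RadialField

variable {E : Type*} [NormedAddCommGroup E] [InnerProductSpace ℝ E]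

def radialField (η : ℝ → ℝ) (x y : E) : E := η (‖y - x‖ ^ 2) • (y - x)

variable {η : ℝ → ℝ}

lemma contDiff_radialField (hη : ContDiff ℝ 1 η) (x : E) : ContDiff ℝ 1 (radialField η x) :=
  (hη.comp ((contDiff_id.sub contDiff_const).norm_sq ℝ)).smul (contDiff_id.sub contDiff_const)

lemma hasCompactSupport_radialField [ProperSpace E] {R : ℝ} (hη : ∀ t, R ≤ t → η (t ^ 2) = 0)
    (x : E) : HasCompactSupport (radialField η x) := by
  refine HasCompactSupport.intro (isCompact_closedBall x R) fun y hy => ?_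
  rw [mem_closedBall, not_le, dist_eq_norm] at hy
  rw [radialField, hη _ hy.le, zero_smul]

lemma norm_radialField_le (hη : ∀ t, 0 ≤ t → |η (t ^ 2)| * t ≤ 1) (x y : E) :
    ‖radialField η x y‖ ≤ 1 := by
  rw [radialField, norm_smul, Real.norm_eq_abs]
  exact hη _ (norm_nonneg _)

lemma hasFDerivAt_radialField {η' : ℝ} {x y : E} (hη : HasDerivAt η η' (‖y - x‖ ^ 2)) :
    HasFDerivAt (radialField η x)
      (η (‖y - x‖ ^ 2) • ContinuousLinearMap.id ℝ E +
        (η' • (2 • innerSL ℝ (y - x))).smulRight (y - x)) y := by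
  have hsub : HasFDerivAt (fun z : E => z - x) (ContinuousLinearMap.id ℝ E) y :=
    (hasFDerivAt_id y).sub_const x
  have hnorm := hsub.norm_sq
  rw [ContinuousLinearMap.comp_id] at hnorm
  exact (hη.comp_hasFDerivAt y hnorm).smul hsub

end RadialField

lemma sum_fderiv_radialField_mul {η : ℝ → ℝ} {η' : ℝ} {x y : E2}
    (hη : HasDerivAt η η' (‖y - x‖ ^ 2)) (S : Mat2) :
    ∑ i : Fin 2, ∑ j : Fin 2,
        fderiv ℝ (radialField η x) y (EuclideanSpace.single j (1 : ℝ)) i * S i j =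
      η (‖y - x‖ ^ 2) * ∑ i, S i i + 2 * η' * ∑ i, ∑ j, (y - x) i * (y - x) j * S i j := by
  rw [(hasFDerivAt_radialField hη).fderiv]
  simp [Fin.sum_univ_two, EuclideanSpace.inner_single_right]
  ring

lemma integrable_firstVariation_integrand (V : Measure (E2 × Mat2)) [IsFiniteMeasure V]
    (hproj : ∀ᵐ p ∂V, IsProj1 p.2) {g : E2 → E2} (hg : C1c g) :
    Integrable (fun p : E2 × Mat2 => ∑ i : Fin 2, ∑ j : Fin 2,
      fderiv ℝ g p.1 (EuclideanSpace.single j (1 : ℝ)) i * p.2 i j) V := by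
  have hcont : Continuous (fderiv ℝ g) := hg.1.continuous_fderiv one_ne_zero
  obtain ⟨M, hM⟩ := hcont.bounded_above_of_compact_support (hg.2.fderiv ℝ)
  refine integrable_finsetSum _ fun i _ => integrable_finsetSum _ fun j _ => ?_
  refine (integrable_const M).mono' (Continuous.aestronglyMeasurable (by fun_prop)) ?_
  filter_upwards [hproj] with p hp
  have hderiv : ‖fderiv ℝ g p.1 (EuclideanSpace.single j (1 : ℝ)) i‖ ≤ M :=
    calc _ ≤ ‖fderiv ℝ g p.1 (EuclideanSpace.single j (1 : ℝ))‖ := PiLp.norm_apply_le _ i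
      _ ≤ ‖fderiv ℝ g p.1‖ * ‖EuclideanSpace.single j (1 : ℝ)‖ := (fderiv ℝ g p.1).le_opNorm _
      _ ≤ M := by simpa using hM p.1
  calc ‖fderiv ℝ g p.1 (EuclideanSpace.single j (1 : ℝ)) i * p.2 i j‖
      ≤ M * 1 := by
        rw [norm_mul]
        exact mul_le_mul hderiv (IsProj1.abs_apply_le_one hp i j) (norm_nonneg _)
          ((norm_nonneg _).trans hderiv)
    _ = M := mul_one M

lemma firstVariation_le_deltaNorm {V : Measure (E2 × Mat2)} (hbfv : BddAbove (fvSet V))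
    {g : E2 → E2} (hg : C1c g) (hg1 : ∀ y, ‖g y‖ ≤ 1) : firstVariation V g ≤ deltaNorm V :=
  le_csSup hbfv ⟨g, hg, hg1, rfl⟩

section TestField

variable {ρ : ℝ} {n : ℕ} {L : ℝ}

lemma c1c_radialField_eta (hρ : 0 < ρ) (hL : 0 < L) (x : E2) : C1c (radialField (eta ρ n L) x) :=
  ⟨contDiff_radialField (contDiff_eta hρ) x,
    hasCompactSupport_radialField (R := 2 * L) (fun t ht => eta_eq_zero hL (by nlinarith)) x⟩

lemma norm_radialField_eta_le (hρ : 0 < ρ) (hn : n ≠ 0) (x y : E2) :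
    ‖radialField (eta ρ n L) x y‖ ≤ 1 :=
  norm_radialField_le (fun t ht => by
    rw [abs_of_nonneg (eta_nonneg hρ _), mul_comm]
    exact (mul_le_mul_of_nonneg_left (eta_le_theta hρ _) ht).trans
      (mul_theta_sq_le_one hρ hn ht)) x y

lemma indicator_sub_le_integrand_radialField_eta (hρ : 0 < ρ) (hn : n ≠ 0) {r : ℝ} (hr : 0 ≤ r)
    (hrL : r < L) {C : ℝ} (hC : ∀ t, |deriv cutoff t| ≤ C) (x : E2) {p : E2 × Mat2}
    (hp : IsProj1 p.2) :
    (Prod.fst ⁻¹' ball x r).indicator (fun _ => thetaDiv ρ n (r ^ 2)) p - 4 * C / L ≤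
      ∑ i : Fin 2, ∑ j : Fin 2,
        fderiv ℝ (radialField (eta ρ n L) x) p.1 (EuclideanSpace.single j (1 : ℝ)) i * p.2 i j := by
  have hL : 0 < L := hr.trans_lt hrL
  set w := p.1 - x
  set q := ∑ i, ∑ j, w i * w j * p.2 i j
  have hq : 0 ≤ q := IsProj1.quadForm_nonneg hp _
  have hqu : q ≤ ‖w‖ ^ 2 := by
    rw [EuclideanSpace.real_norm_sq_eq]; exact IsProj1.quadForm_le hp _
  rw [sum_fderiv_radialField_mul (hasDerivAt_eta hρ _) p.2, IsProj1.trace_eq_one hp, mul_one,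
    mul_right_comm]
  have hglobal := neg_le_eta_add hρ hn hL hC hq hqu
  by_cases hy : p ∈ Prod.fst ⁻¹' ball x r
  · rw [Set.indicator_of_mem hy]
    rw [Set.mem_preimage, mem_ball, dist_eq_norm] at hy
    have hball : thetaDiv ρ n (r ^ 2) ≤ thetaDiv ρ n (‖w‖ ^ 2) :=
      thetaDiv_antitoneOn hρ hn (Set.mem_Ici.2 (sq_nonneg _)) (Set.mem_Ici.2 (sq_nonneg r))
        (pow_le_pow_left₀ (norm_nonneg _) hy.le 2)
    have hinner := thetaDiv_le_eta_add hρ hn hL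
      (pow_lt_pow_left₀ (hy.trans hrL) (norm_nonneg _) two_ne_zero) hq hqu
    have hC0 : 0 ≤ 4 * C / L := by have := (abs_nonneg _).trans (hC 0); positivity
    linarith
  · rw [Set.indicator_of_notMem hy]
    linarith

lemma firstVariation_radialField_eta_ge (V : Measure (E2 × Mat2)) [IsFiniteMeasure V]
    (hproj : ∀ᵐ p ∂V, IsProj1 p.2) (hρ : 0 < ρ) (hn : n ≠ 0) {r : ℝ} (hr : 0 ≤ r) (hrL : r < L)
    {C : ℝ} (hC : ∀ t, |deriv cutoff t| ≤ C) (x : E2) :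
    thetaDiv ρ n (r ^ 2) * V.real (Prod.fst ⁻¹' ball x r) - 4 * C / L * V.real Set.univ ≤
      firstVariation V (radialField (eta ρ n L) x) := by
  have hA : MeasurableSet (Prod.fst ⁻¹' ball x r : Set (E2 × Mat2)) :=
    measurable_fst measurableSet_ball
  have hlower : Integrable (fun p : E2 × Mat2 =>
      (Prod.fst ⁻¹' ball x r).indicator (fun _ => thetaDiv ρ n (r ^ 2)) p - 4 * C / L) V :=
    ((integrable_const _).indicator hA).sub (integrable_const _)
  calc thetaDiv ρ n (r ^ 2) * V.real (Prod.fst ⁻¹' ball x r) - 4 * C / L * V.real Set.univ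
      = ∫ p, ((Prod.fst ⁻¹' ball x r).indicator (fun _ => thetaDiv ρ n (r ^ 2)) p - 4 * C / L)
          ∂V := by
        rw [integral_sub ((integrable_const _).indicator hA) (integrable_const _),
          integral_indicator_const _ hA, integral_const, smul_eq_mul, smul_eq_mul]
        ring
    _ ≤ firstVariation V (radialField (eta ρ n L) x) :=
        integral_mono_ae hlower
          (integrable_firstVariation_integrand V hproj (c1c_radialField_eta hρ (hr.trans_lt hrL) x))
          (hproj.mono fun p hp => indicator_sub_le_integrand_radialField_eta hρ hn hr hrL hC x hp)

end TestField

variable {V : Measure (E2 × Mat2)} [IsFiniteMeasure V]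

lemma thetaDiv_mul_le_deltaNorm (hproj : ∀ᵐ p ∂V, IsProj1 p.2) (hbfv : BddAbove (fvSet V))
    {ρ : ℝ} (hρ : 0 < ρ) {n : ℕ} (hn : n ≠ 0) {r : ℝ} (hr : 0 ≤ r) (x : E2) :
    thetaDiv ρ n (r ^ 2) * V.real (Prod.fst ⁻¹' ball x r) ≤ deltaNorm V := by
  obtain ⟨C, hC⟩ := exists_abs_deriv_cutoff_le
  have hlim : Tendsto (fun L => thetaDiv ρ n (r ^ 2) * V.real (Prod.fst ⁻¹' ball x r) -
      4 * C / L * V.real Set.univ) atTop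
      (𝓝 (thetaDiv ρ n (r ^ 2) * V.real (Prod.fst ⁻¹' ball x r) - 0 * V.real Set.univ)) :=
    (tendsto_const_nhds.div_atTop tendsto_id).mul_const _ |>.const_sub _
  rw [zero_mul, sub_zero] at hlim
  refine le_of_tendsto hlim ?_
  filter_upwards [eventually_gt_atTop r] with L hrL
  exact (firstVariation_radialField_eta_ge V hproj hρ hn hr hrL hC x).trans
    (firstVariation_le_deltaNorm hbfv (c1c_radialField_eta hρ (hr.trans_lt hrL) x)
      (norm_radialField_eta_le hρ hn x))

lemma measureReal_le_mul_deltaNorm (hproj : ∀ᵐ p ∂V, IsProj1 p.2) (hbfv : BddAbove (fvSet V))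
    {r : ℝ} (hr : 0 ≤ r) (x : E2) :
    V.real (Prod.fst ⁻¹' ball x r) ≤ r * deltaNorm V := by
  have hρ : ∀ ρ, r < ρ → V.real (Prod.fst ⁻¹' ball x r) ≤ ρ * deltaNorm V := by
    intro ρ hrρ
    have hρ0 : 0 < ρ := hr.trans_lt hrρ
    have hlim := (tendsto_thetaDiv hρ0 (by positivity)
      (pow_lt_pow_left₀ hrρ hr two_ne_zero)).mul_const (V.real (Prod.fst ⁻¹' ball x r))
    have hle : ρ⁻¹ * V.real (Prod.fst ⁻¹' ball x r) ≤ deltaNorm V :=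
      le_of_tendsto hlim ((eventually_ne_atTop 0).mono fun n hn =>
        thetaDiv_mul_le_deltaNorm hproj hbfv hρ0 hn hr x)
    rwa [inv_mul_le_iff₀ hρ0] at hle
  exact ge_of_tendsto (x := 𝓝[>] r)
    (((continuous_id.mul continuous_const).tendsto r).mono_left nhdsWithin_le_nhds)
    (eventually_nhdsWithin_of_forall hρ)

end VarifoldDensity

/-- for a 1-varifold on ℝ² with finite weight and bounded first
variation, the density-ratio supremum is bounded by ‖δV‖(ℝ²). -/
theorem statement0 (V : Measure (E2 × Mat2)) [IsFiniteMeasure V]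
    (hproj : ∀ᵐ p ∂V, IsProj1 p.2)
    (hbfv : BddAbove (fvSet V)) :
    Dsup (VarWeight V) ≤ deltaNorm V ∧
      ∀ (x : E2) (r : ℝ), 0 < r →
        ((VarWeight V) (ball x r)).toReal / r ≤ deltaNorm V := by
  have hratio : ∀ (x : E2) (r : ℝ), 0 < r →
      ((VarWeight V) (ball x r)).toReal / r ≤ deltaNorm V := by
    intro x r hr
    rw [VarWeight, Measure.map_apply measurable_fst measurableSet_ball, div_le_iff₀ hr, mul_comm]
    exact VarifoldDensity.measureReal_le_mul_deltaNorm hproj hbfv hr.le x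
  refine ⟨csSup_le ⟨_, 0, 1, one_pos, rfl⟩ ?_, hratio⟩
  rintro q ⟨x, r, hr, rfl⟩
  exact hratio x r hr
end
end

section
/- Let V be a 1-varifold on ℝ² with finite weight ‖V‖(ℝ²) < ∞ and bounded first variation whose total variation measure ‖δV‖ is absolutely continuous with respect to ‖V‖, with generalized curvature h(·,V). Then 𝔇(‖V‖) ≤ (‖V‖(ℝ²))^{1/2} · (∫_{ℝ²} |h(·,V)|² d‖V‖)^{1/2}, where 𝔇(‖V‖) := sup{ ‖V‖(B_r(x))/r : x ∈ ℝ², r > 0 }. -/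
open MeasureTheory Metric Filter
open scoped ENNReal RealInnerProductSpace BigOperators

noncomputable section

/-!
Test the first variation with the radial field `g(x) = ψ(|x - x₀|²) (x - x₀)`. Writing `y = x - x₀`
and `q = |y|²`, its tangential divergence along a line `S` is `ψ(q) + 2 ψ'(q) yᵀSy`, and
`0 ≤ yᵀSy ≤ q` because `S` is a rank-one orthogonal projection; so for `ψ' ≤ 0` it is at least
`ψ + 2qψ'`, and the curvature identity bounds `∫ (ψ + 2qψ') d‖V‖` by `sup |g| · ∫ |h| d‖V‖`.
For `ψ = min(1, τ/√q)` one has `|g| ≤ τ`, while `ψ + 2qψ'` is `1` on `B_τ(x₀)` and `0` outside,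
whence `‖V‖(B_τ(x₀)) ≤ τ ∫ |h| d‖V‖`; Cauchy–Schwarz finishes. As this `ψ` is not `C¹`, it is
replaced by `ζ_k(q) η_R(q)`, where `ζ_k(q) = (1 + (q/σ²)^(2k))^(-1/(4k)) → min(1, σ/√q)` and `η_R`
cuts off at `q ≈ R²`; the limits `R → ∞`, `k → ∞`, `σ ↓ τ` recover the sharp constant.
-/

open Topology

namespace Varifold1

instance (V : Measure (E2 × Mat2)) [IsFiniteMeasure V] : IsFiniteMeasure (VarWeight V) := by
  unfold VarWeight
  infer_instance

lemma lt_sq_norm_sub_of_notMem_closedBall {E : Type*} [SeminormedAddCommGroup E] {x x₀ : E}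
    {Q₀ : ℝ} (hx : x ∉ closedBall x₀ √Q₀) : Q₀ < ‖x - x₀‖ ^ 2 := by
  rwa [mem_closedBall, not_le, dist_eq_norm, Real.sqrt_lt' ((Real.sqrt_nonneg _).trans_lt hx)] at hx

lemma deriv_eq_zero_of_eq_zero_on_Ioi {ψ : ℝ → ℝ} {Q₀ : ℝ} (hψ : ∀ q, Q₀ < q → ψ q = 0) {q : ℝ}
    (hq : Q₀ < q) : deriv ψ q = 0 := by
  have : ψ =ᶠ[𝓝 q] fun _ => 0 := eventually_of_mem (Ioi_mem_nhds hq) hψ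
  rw [this.deriv_eq, deriv_const]

def quadForm (S : Mat2) (y : E2) : ℝ := ∑ i : Fin 2, ∑ j : Fin 2, y i * y j * S i j

section Projection

variable {S : Mat2}

lemma quadForm_eq_of_isProj1 (hS : IsProj1 S) (y : E2) :
    quadForm S y = (S 0 0 * y 0 + S 0 1 * y 1) ^ 2 + (S 0 1 * y 0 + S 1 1 * y 1) ^ 2 ∧
      ‖y‖ ^ 2 - quadForm S y =
        ((1 - S 0 0) * y 0 - S 0 1 * y 1) ^ 2 + (S 0 1 * y 0 - (1 - S 1 1) * y 1) ^ 2 := by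
  obtain ⟨hidem, hsym, -⟩ := hS
  have h00 := hidem 0 0
  have h01 := hidem 0 1
  have h11 := hidem 1 1
  simp only [quadForm, EuclideanSpace.norm_sq_eq, Real.norm_eq_abs, sq_abs, Fin.sum_univ_two]
    at h00 h01 h11 ⊢
  simp only [hsym 1 0] at h00 h01 h11 ⊢
  constructor
  · linear_combination (-y 0 ^ 2) * h00 + (-2 * y 0 * y 1) * h01 + (-y 1 ^ 2) * h11
  · linear_combination (-y 0 ^ 2) * h00 + (-2 * y 0 * y 1) * h01 + (-y 1 ^ 2) * h11

lemma quadForm_nonneg_of_isProj1 (hS : IsProj1 S) (y : E2) : 0 ≤ quadForm S y := by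
  rw [(quadForm_eq_of_isProj1 hS y).1]
  positivity

lemma quadForm_le_of_isProj1 (hS : IsProj1 S) (y : E2) : quadForm S y ≤ ‖y‖ ^ 2 := by
  have := (quadForm_eq_of_isProj1 hS y).2
  nlinarith [sq_nonneg ((1 - S 0 0) * y 0 - S 0 1 * y 1),
    sq_nonneg (S 0 1 * y 0 - (1 - S 1 1) * y 1)]

end Projection

section RadialField

variable {E : Type*} [NormedAddCommGroup E] [InnerProductSpace ℝ E]

def radialField (ψ : ℝ → ℝ) (x₀ x : E) : E := ψ (‖x - x₀‖ ^ 2) • (x - x₀)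

variable {ψ : ℝ → ℝ} {x₀ : E}

lemma fderiv_radialField_apply {x : E} (hψ : DifferentiableAt ℝ ψ (‖x - x₀‖ ^ 2)) (v : E) :
    fderiv ℝ (radialField ψ x₀) x v =
      ψ (‖x - x₀‖ ^ 2) • v + (2 * deriv ψ (‖x - x₀‖ ^ 2) * ⟪x - x₀, v⟫) • (x - x₀) := by
  have hy : HasFDerivAt (fun y : E => y - x₀) (ContinuousLinearMap.id ℝ E) x :=
    (hasFDerivAt_id x).sub_const x₀
  have hg : HasFDerivAt (radialField ψ x₀) _ x :=
    (hψ.hasDerivAt.comp_hasFDerivAt x hy.norm_sq).smul hy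
  rw [hg.fderiv]
  simp only [add_apply, smul_apply,
    ContinuousLinearMap.smulRight_apply, ContinuousLinearMap.comp_apply,
    ContinuousLinearMap.id_apply, innerSL_apply_apply, Function.comp_apply, smul_eq_mul,
    nsmul_eq_mul]
  module

lemma contDiff_radialField (hψ : ContDiff ℝ 1 ψ) : ContDiff ℝ 1 (radialField ψ x₀) :=
  (hψ.comp ((contDiff_id.sub contDiff_const).norm_sq ℝ)).smul (contDiff_id.sub contDiff_const)

lemma norm_radialField (x : E) : ‖radialField ψ x₀ x‖ = |ψ (‖x - x₀‖ ^ 2)| * ‖x - x₀‖ := by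
  rw [radialField, norm_smul, Real.norm_eq_abs]

lemma hasCompactSupport_radialField [ProperSpace E] {Q₀ : ℝ} (hψ : ∀ q, Q₀ < q → ψ q = 0) :
    HasCompactSupport (radialField ψ x₀) := by
  refine HasCompactSupport.intro (isCompact_closedBall x₀ √Q₀) fun x hx => ?_
  simp [radialField, hψ _ (lt_sq_norm_sub_of_notMem_closedBall hx)]

end RadialField

section RadialIntegrand

def radialIntegrand (ψ : ℝ → ℝ) (x₀ : E2) (p : E2 × Mat2) : ℝ :=
  ψ (‖p.1 - x₀‖ ^ 2) * ∑ i : Fin 2, p.2 i i +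
    2 * deriv ψ (‖p.1 - x₀‖ ^ 2) * quadForm p.2 (p.1 - x₀)

variable {ψ : ℝ → ℝ} {x₀ : E2} {Q₀ σ : ℝ} {h : E2 → E2}

lemma firstVariation_radialField (V : Measure (E2 × Mat2)) (hψ : Differentiable ℝ ψ) :
    firstVariation V (radialField ψ x₀) = ∫ p, radialIntegrand ψ x₀ p ∂V := by
  unfold firstVariation
  congr 1
  funext p
  simp only [fderiv_radialField_apply (hψ _), EuclideanSpace.inner_single_right, PiLp.add_apply,
    PiLp.smul_apply, smul_eq_mul, PiLp.single_apply, radialIntegrand, quadForm,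
    Fin.sum_univ_two]
  norm_num
  ring

lemma continuous_radialIntegrand (hψ : ContDiff ℝ 1 ψ) : Continuous (radialIntegrand ψ x₀) := by
  have := hψ.continuous
  have := hψ.continuous_deriv le_rfl
  unfold radialIntegrand quadForm
  fun_prop

lemma integrable_radialIntegrand (V : Measure (E2 × Mat2)) [IsFiniteMeasure V]
    (hproj : ∀ᵐ p ∂V, IsProj1 p.2) (hψ : ContDiff ℝ 1 ψ) {Q₀ : ℝ}
    (hψ0 : ∀ q, Q₀ < q → ψ q = 0) :
    Integrable (radialIntegrand ψ x₀) V := by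
  set f : E2 → ℝ := fun x => |ψ (‖x - x₀‖ ^ 2)| + 2 * |deriv ψ (‖x - x₀‖ ^ 2)| * ‖x - x₀‖ ^ 2
  have hf : Continuous f := by
    have := hψ.continuous
    have := hψ.continuous_deriv le_rfl
    fun_prop
  have hfs : HasCompactSupport f := by
    refine HasCompactSupport.intro (isCompact_closedBall x₀ √Q₀) fun x hx => ?_
    have hq := lt_sq_norm_sub_of_notMem_closedBall hx
    simp [f, hψ0 _ hq, deriv_eq_zero_of_eq_zero_on_Ioi hψ0 hq]
  obtain ⟨B, hB⟩ := hfs.exists_bound_of_continuous hf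
  refine Integrable.mono' (integrable_const B)
    (continuous_radialIntegrand hψ).aestronglyMeasurable ?_
  filter_upwards [hproj] with p hp
  have hQ0 := quadForm_nonneg_of_isProj1 hp (p.1 - x₀)
  have hQ := quadForm_le_of_isProj1 hp (p.1 - x₀)
  calc ‖radialIntegrand ψ x₀ p‖ ≤ f p.1 := by
        rw [radialIntegrand, hp.2.2, mul_one, Real.norm_eq_abs]
        refine (abs_add_le _ _).trans ?_
        rw [abs_mul, abs_mul, abs_two, abs_of_nonneg hQ0]
        exact add_le_add_right (by gcongr) _
    _ ≤ B := (le_abs_self _).trans (hB p.1)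

lemma integral_radialIntegrand_le (V : Measure (E2 × Mat2))
    (hint : Integrable h (VarWeight V))
    (hcurv : ∀ g : E2 → E2, C1c g → firstVariation V g = -∫ x, ⟪g x, h x⟫ ∂(VarWeight V))
    (hψ : ContDiff ℝ 1 ψ) (hψ0 : ∀ q, Q₀ < q → ψ q = 0) (hσ : ∀ x, ‖radialField ψ x₀ x‖ ≤ σ) :
    ∫ p, radialIntegrand ψ x₀ p ∂V ≤ σ * ∫ x, ‖h x‖ ∂(VarWeight V) := by
  rw [← firstVariation_radialField V (hψ.differentiable one_ne_zero),
    hcurv _ ⟨contDiff_radialField hψ, hasCompactSupport_radialField hψ0⟩, ← integral_const_mul]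
  refine (neg_le_abs _).trans (abs_integral_le_integral_abs.trans
    (integral_mono_of_nonneg (Eventually.of_forall fun _ => abs_nonneg _)
      (hint.norm.const_mul σ) (Eventually.of_forall fun x => ?_)))
  exact (abs_real_inner_le_norm _ _).trans (mul_le_mul_of_nonneg_right (hσ x) (norm_nonneg _))

lemma mul_measure_ball_sub_le (V : Measure (E2 × Mat2)) [IsFiniteMeasure V]
    (hproj : ∀ᵐ p ∂V, IsProj1 p.2) (hint : Integrable h (VarWeight V))
    (hcurv : ∀ g : E2 → E2, C1c g → firstVariation V g = -∫ x, ⟪g x, h x⟫ ∂(VarWeight V))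
    (hψ : ContDiff ℝ 1 ψ) (hψ0 : ∀ q, Q₀ < q → ψ q = 0) (hσ : ∀ x, ‖radialField ψ x₀ x‖ ≤ σ)
    {τ c e : ℝ} (hlow : ∀ q Q, 0 ≤ Q → Q ≤ q → -e ≤ ψ q + 2 * deriv ψ q * Q)
    (hball : ∀ q Q, 0 ≤ Q → Q ≤ q → q < τ ^ 2 → c - e ≤ ψ q + 2 * deriv ψ q * Q) :
    c * (VarWeight V (ball x₀ τ)).toReal - e * (VarWeight V Set.univ).toReal ≤
      σ * ∫ x, ‖h x‖ ∂(VarWeight V) := by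
  set L : E2 → ℝ := fun x => (ball x₀ τ).indicator (fun _ => c) x - e
  have hL : Integrable L (VarWeight V) :=
    ((integrable_const c).indicator measurableSet_ball).sub (integrable_const e)
  have hL_le : ∀ᵐ p ∂V, L p.1 ≤ radialIntegrand ψ x₀ p := by
    filter_upwards [hproj] with p hp
    have hQ0 := quadForm_nonneg_of_isProj1 hp (p.1 - x₀)
    have hQ := quadForm_le_of_isProj1 hp (p.1 - x₀)
    rw [radialIntegrand, hp.2.2, mul_one]
    by_cases hx : p.1 ∈ ball x₀ τ
    · have hq : ‖p.1 - x₀‖ ^ 2 < τ ^ 2 := by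
        rw [mem_ball, dist_eq_norm] at hx
        exact pow_lt_pow_left₀ hx (norm_nonneg _) two_ne_zero
      simpa [L, hx] using hball _ _ hQ0 hQ hq
    · simpa [L, hx] using hlow _ _ hQ0 hQ
  calc c * (VarWeight V (ball x₀ τ)).toReal - e * (VarWeight V Set.univ).toReal
      = ∫ x, L x ∂(VarWeight V) := by
        rw [integral_sub ((integrable_const c).indicator measurableSet_ball) (integrable_const e),
          integral_indicator_const _ measurableSet_ball, integral_const]
        simp [Measure.real, mul_comm]
    _ = ∫ p, L p.1 ∂V := integral_map measurable_fst.aemeasurable hL.aestronglyMeasurable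
    _ ≤ ∫ p, radialIntegrand ψ x₀ p ∂V :=
        integral_mono_ae (hL.comp_measurable measurable_fst)
          (integrable_radialIntegrand V hproj hψ hψ0) hL_le
    _ ≤ σ * ∫ x, ‖h x‖ ∂(VarWeight V) := integral_radialIntegrand_le V hint hcurv hψ hψ0 hσ

end RadialIntegrand

section Profile

variable {σ R q : ℝ} {k : ℕ}

/-- A smooth version of `min 1 (σ / √q)`, sharper as `k → ∞`. -/
def zeta (σ : ℝ) (k : ℕ) (q : ℝ) : ℝ := (1 + (q / σ ^ 2) ^ (2 * k)) ^ (-(4 * k : ℝ)⁻¹)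

def phi (σ : ℝ) (k : ℕ) (q : ℝ) : ℝ := (1 + (q / σ ^ 2) ^ (2 * k)) ^ (-(4 * k : ℝ)⁻¹ - 1)

lemma one_le_one_add_pow (σ : ℝ) (k : ℕ) (q : ℝ) : 1 ≤ 1 + (q / σ ^ 2) ^ (2 * k) :=
  le_add_of_nonneg_right ((even_two_mul k).pow_nonneg _)

lemma zeta_nonneg (σ : ℝ) (k : ℕ) (q : ℝ) : 0 ≤ zeta σ k q :=
  Real.rpow_nonneg (zero_le_one.trans (one_le_one_add_pow σ k q)) _

lemma phi_nonneg (σ : ℝ) (k : ℕ) (q : ℝ) : 0 ≤ phi σ k q :=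
  Real.rpow_nonneg (zero_le_one.trans (one_le_one_add_pow σ k q)) _

lemma contDiff_zeta : ContDiff ℝ 1 (zeta σ k) :=
  ContDiff.rpow_const_of_ne (by fun_prop)
    fun q => (zero_lt_one.trans_le (one_le_one_add_pow σ k q)).ne'

lemma hasDerivAt_zeta (hk : k ≠ 0) (q : ℝ) :
    HasDerivAt (zeta σ k) (-phi σ k q * (q / σ ^ 2) ^ (2 * k - 1) / (2 * σ ^ 2)) q := by
  have hbase := zero_lt_one.trans_le (one_le_one_add_pow σ k q)
  have hpow : HasDerivAt (fun y => 1 + (y / σ ^ 2) ^ (2 * k))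
      ((2 * k : ℕ) * (q / σ ^ 2) ^ (2 * k - 1) * (1 / σ ^ 2)) q :=
    (((hasDerivAt_id' q).div_const (σ ^ 2)).fun_pow (2 * k)).const_add 1
  refine (hpow.rpow_const (p := -(4 * k : ℝ)⁻¹) (Or.inl hbase.ne')).congr_deriv ?_
  have hk' : (k : ℝ) ≠ 0 := Nat.cast_ne_zero.2 hk
  rw [phi]
  push_cast
  field_simp
  ring

lemma zeta_add_two_mul_deriv (hk : k ≠ 0) (hσ : σ ≠ 0) (q : ℝ) :
    zeta σ k q + 2 * q * deriv (zeta σ k) q = phi σ k q := by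
  have hbase := zero_lt_one.trans_le (one_le_one_add_pow σ k q)
  have hzeta : zeta σ k q = phi σ k q * (1 + (q / σ ^ 2) ^ (2 * k)) := by
    rw [zeta, phi, ← Real.rpow_add_one hbase.ne', sub_add_cancel]
  have hpow : (q / σ ^ 2) ^ (2 * k) = q / σ ^ 2 * (q / σ ^ 2) ^ (2 * k - 1) := by
    rw [← pow_succ', Nat.sub_add_cancel (by omega)]
  rw [(hasDerivAt_zeta hk q).deriv, hzeta, hpow]
  field_simp
  ring

lemma deriv_zeta_nonpos (hk : k ≠ 0) (hq : 0 ≤ q) : deriv (zeta σ k) q ≤ 0 := by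
  rw [(hasDerivAt_zeta hk q).deriv, neg_mul, neg_div, neg_nonpos]
  have := pow_nonneg (div_nonneg hq (sq_nonneg σ)) (2 * k - 1)
  have := phi_nonneg σ k q
  positivity

lemma sqrt_mul_zeta_le (hk : k ≠ 0) (hσ : 0 < σ) (hq : 0 ≤ q) : √q * zeta σ k q ≤ σ := by
  set t := q / σ ^ 2
  have ht : 0 ≤ t := div_nonneg hq (sq_nonneg σ)
  have hsqrt : √q = σ * √t := by
    rw [Real.sqrt_div' _ (sq_nonneg σ), Real.sqrt_sq hσ.le, mul_div_cancel₀ _ hσ.ne']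
  have hbase := one_le_one_add_pow σ k q
  suffices √t * zeta σ k q ≤ 1 by
    rw [hsqrt, mul_assoc]
    exact mul_le_of_le_one_right hσ.le this
  rw [← pow_le_one_iff_of_nonneg (mul_nonneg (Real.sqrt_nonneg t) (zeta_nonneg _ _ _))
    (by omega : 4 * k ≠ 0)]
  have hz : zeta σ k q ^ (4 * k) = (1 + t ^ (2 * k))⁻¹ := by
    rw [zeta, ← Real.rpow_natCast, ← Real.rpow_mul (zero_le_one.trans hbase)]
    have hk' : (k : ℝ) ≠ 0 := Nat.cast_ne_zero.2 hk
    rw [show -(4 * k : ℝ)⁻¹ * ((4 * k : ℕ) : ℝ) = -1 by push_cast; field_simp,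
      Real.rpow_neg_one]
  have hs : √t ^ (4 * k) = t ^ (2 * k) := by
    rw [show 4 * k = 2 * (2 * k) by ring, pow_mul, Real.sq_sqrt ht]
  rw [mul_pow, hz, hs]
  exact mul_inv_le_one_of_le₀ (by linarith) (by linarith)

lemma phi_ge {τ : ℝ} (hq0 : 0 ≤ q) (hq : q ≤ τ ^ 2) :
    (1 + (τ / σ) ^ (4 * k)) ^ (-2 : ℝ) ≤ phi σ k q := by
  have hbase := one_le_one_add_pow σ k q
  have hle : 1 + (q / σ ^ 2) ^ (2 * k) ≤ 1 + (τ / σ) ^ (4 * k) := by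
    rw [show (τ / σ) ^ (4 * k) = (τ ^ 2 / σ ^ 2) ^ (2 * k) by rw [← div_pow, ← pow_mul]; ring_nf]
    gcongr
  have hexp : (-2 : ℝ) ≤ -(4 * k : ℝ)⁻¹ - 1 := by
    have : (4 * k : ℝ)⁻¹ ≤ 1 := by
      rcases Nat.eq_zero_or_pos k with rfl | hk
      · simp
      · exact inv_le_one_of_one_le₀ (by norm_cast; omega)
    linarith
  calc (1 + (τ / σ) ^ (4 * k)) ^ (-2 : ℝ) ≤ (1 + (q / σ ^ 2) ^ (2 * k)) ^ (-2 : ℝ) :=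
        Real.rpow_le_rpow_of_nonpos (by linarith) hle (by norm_num)
    _ ≤ phi σ k q := Real.rpow_le_rpow_of_exponent_le hbase hexp

lemma exists_abs_deriv_smoothTransition_le : ∃ C, ∀ x, |deriv Real.smoothTransition x| ≤ C := by
  have hconst : ∀ x ∉ Set.Icc (0 : ℝ) 1, deriv Real.smoothTransition x = 0 := by
    intro x hx
    rcases not_and_or.1 hx with hx | hx <;> rw [not_le] at hx
    · have : Real.smoothTransition =ᶠ[nhds x] fun _ => 0 := eventually_of_mem (Iio_mem_nhds hx)
        fun y hy => Real.smoothTransition.zero_of_nonpos (le_of_lt hy)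
      rw [this.deriv_eq, deriv_const]
    · have : Real.smoothTransition =ᶠ[nhds x] fun _ => 1 := eventually_of_mem (Ioi_mem_nhds hx)
        fun y hy => Real.smoothTransition.one_of_one_le (le_of_lt hy)
      rw [this.deriv_eq, deriv_const]
  exact (HasCompactSupport.intro isCompact_Icc hconst).exists_bound_of_continuous
    ((Real.smoothTransition.contDiff (n := 1)).continuous_deriv le_rfl)

def eta (R q : ℝ) : ℝ := 1 - Real.smoothTransition (q / R ^ 2 - 1)

lemma contDiff_eta : ContDiff ℝ 1 (eta R) :=
  contDiff_const.sub (Real.smoothTransition.contDiff.comp (by fun_prop))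

lemma eta_nonneg (R q : ℝ) : 0 ≤ eta R q := sub_nonneg.2 (Real.smoothTransition.le_one _)

lemma eta_le_one (R q : ℝ) : eta R q ≤ 1 := sub_le_self _ (Real.smoothTransition.nonneg _)

lemma eta_eq_one (hq : q ≤ R ^ 2) : eta R q = 1 := by
  rw [eta, Real.smoothTransition.zero_of_nonpos, sub_zero]
  linarith [div_le_one_of_le₀ hq (sq_nonneg R)]

lemma eta_eq_zero (hR : R ≠ 0) (hq : 2 * R ^ 2 ≤ q) : eta R q = 0 := by
  rw [eta, Real.smoothTransition.one_of_one_le, sub_self]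
  linarith [(le_div_iff₀ (by positivity : 0 < R ^ 2)).2 hq]

lemma abs_deriv_eta_le {C : ℝ} (hC : ∀ x, |deriv Real.smoothTransition x| ≤ C) :
    |deriv (eta R) q| ≤ C / R ^ 2 := by
  have hθ : HasDerivAt Real.smoothTransition (deriv Real.smoothTransition (q / R ^ 2 - 1))
      (q / R ^ 2 - 1) :=
    ((Real.smoothTransition.contDiff (n := 1)).differentiable one_ne_zero _).hasDerivAt
  have hin : HasDerivAt (fun y => y / R ^ 2 - 1) (1 / R ^ 2) q :=
    ((hasDerivAt_id' q).div_const (R ^ 2)).sub_const 1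
  have hη : HasDerivAt (eta R)
      (-(deriv Real.smoothTransition (q / R ^ 2 - 1) * (1 / R ^ 2))) q :=
    HasDerivAt.const_sub 1 (hθ.comp q hin :)
  rw [hη.deriv, abs_neg, abs_mul, one_div, abs_inv, abs_of_nonneg (sq_nonneg R)]
  exact mul_le_mul_of_nonneg_right (hC _) (inv_nonneg.2 (sq_nonneg R))

def psi (σ : ℝ) (k : ℕ) (R q : ℝ) : ℝ := zeta σ k q * eta R q

lemma contDiff_psi : ContDiff ℝ 1 (psi σ k R) := contDiff_zeta.mul contDiff_eta

lemma psi_eq_zero (hR : R ≠ 0) (hq : 2 * R ^ 2 < q) : psi σ k R q = 0 := by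
  rw [psi, eta_eq_zero hR hq.le, mul_zero]

lemma deriv_psi :
    deriv (psi σ k R) q = deriv (zeta σ k) q * eta R q + zeta σ k q * deriv (eta R) q :=
  deriv_mul (contDiff_zeta.differentiable one_ne_zero q) (contDiff_eta.differentiable one_ne_zero q)

lemma norm_radialField_psi_le (hk : k ≠ 0) (hσ : 0 < σ) (x₀ x : E2) :
    ‖radialField (psi σ k R) x₀ x‖ ≤ σ := by
  have hq := sqrt_mul_zeta_le hk hσ (sq_nonneg ‖x - x₀‖)
  rw [Real.sqrt_sq (norm_nonneg _)] at hq
  rw [norm_radialField, psi, abs_of_nonneg (mul_nonneg (zeta_nonneg _ _ _) (eta_nonneg _ _))]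
  calc zeta σ k _ * eta R _ * ‖x - x₀‖ ≤ zeta σ k _ * 1 * ‖x - x₀‖ := by
        gcongr
        · exact zeta_nonneg _ _ _
        · exact eta_le_one _ _
    _ ≤ σ := by linarith

lemma two_mul_zeta_mul_abs_deriv_eta_le {C : ℝ} (hC : ∀ x, |deriv Real.smoothTransition x| ≤ C)
    (hk : k ≠ 0) (hσ : 0 < σ) (hR : 0 < R) (hq : 0 ≤ q) :
    2 * q * zeta σ k q * |deriv (eta R) q| ≤ 2 * √2 * σ * C / R := by
  have hC0 : 0 ≤ C := (abs_nonneg _).trans (hC 0)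
  rcases lt_or_ge (2 * R ^ 2) q with hfar | hnear
  · rw [deriv_eq_zero_of_eq_zero_on_Ioi (fun q hq => eta_eq_zero hR.ne' hq.le) hfar]
    simp only [abs_zero, mul_zero]
    positivity
  have hsqrt : √q ≤ √2 * R := by
    rw [← Real.sqrt_sq hR.le, ← Real.sqrt_mul zero_le_two]
    exact Real.sqrt_le_sqrt hnear
  have hqζ : q * zeta σ k q ≤ √2 * R * σ := by
    calc q * zeta σ k q = √q * (√q * zeta σ k q) := by rw [← mul_assoc, Real.mul_self_sqrt hq]
      _ ≤ √2 * R * σ := mul_le_mul hsqrt (sqrt_mul_zeta_le hk hσ hq)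
          (mul_nonneg (Real.sqrt_nonneg q) (zeta_nonneg _ _ _)) (by positivity)
  calc 2 * q * zeta σ k q * |deriv (eta R) q| ≤ 2 * (√2 * R * σ) * (C / R ^ 2) := by
        rw [mul_assoc 2]
        exact mul_le_mul (by linarith) (abs_deriv_eta_le hC) (abs_nonneg _) (by positivity)
    _ = 2 * √2 * σ * C / R := by field_simp

lemma psi_add_two_mul_deriv_ge {C : ℝ} (hC : ∀ x, |deriv Real.smoothTransition x| ≤ C)
    (hk : k ≠ 0) (hσ : 0 < σ) (hR : 0 < R) {Q : ℝ} (hQ0 : 0 ≤ Q) (hQ : Q ≤ q) :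
    phi σ k q * eta R q - 2 * √2 * σ * C / R ≤ psi σ k R q + 2 * deriv (psi σ k R) q * Q := by
  have hq : 0 ≤ q := hQ0.trans hQ
  have hidentity := zeta_add_two_mul_deriv hk hσ.ne' q
  have hmono : deriv (zeta σ k) q * eta R q * q ≤ deriv (zeta σ k) q * eta R q * Q :=
    mul_le_mul_of_nonpos_left hQ
      (mul_nonpos_of_nonpos_of_nonneg (deriv_zeta_nonpos hk hq) (eta_nonneg _ _))
  have herr : |2 * zeta σ k q * deriv (eta R) q * Q| ≤ 2 * √2 * σ * C / R := by
    refine le_trans ?_ (two_mul_zeta_mul_abs_deriv_eta_le hC hk hσ hR hq)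
    rw [abs_mul, abs_mul, abs_mul, abs_two, abs_of_nonneg (zeta_nonneg _ _ _), abs_of_nonneg hQ0]
    have := mul_le_mul_of_nonneg_left hQ
      (mul_nonneg (mul_nonneg zero_le_two (zeta_nonneg σ k q)) (abs_nonneg (deriv (eta R) q)))
    linarith
  have hphi : phi σ k q * eta R q =
      zeta σ k q * eta R q + 2 * (deriv (zeta σ k) q * eta R q * q) := by
    rw [← hidentity]; ring
  rw [psi, deriv_psi, hphi]
  linarith [neg_abs_le (2 * zeta σ k q * deriv (eta R) q * Q)]

end Profile

section Limits

variable {h : E2 → E2}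

lemma mul_measure_ball_sub_le_psi (V : Measure (E2 × Mat2)) [IsFiniteMeasure V]
    (hproj : ∀ᵐ p ∂V, IsProj1 p.2) (hint : Integrable h (VarWeight V))
    (hcurv : ∀ g : E2 → E2, C1c g → firstVariation V g = -∫ x, ⟪g x, h x⟫ ∂(VarWeight V))
    {C : ℝ} (hC : ∀ x, |deriv Real.smoothTransition x| ≤ C) (x₀ : E2) {τ σ R : ℝ} {k : ℕ}
    (hτ : 0 < τ) (hσ : 0 < σ) (hk : k ≠ 0) (hR : τ ≤ R) :
    (1 + (τ / σ) ^ (4 * k)) ^ (-2 : ℝ) * (VarWeight V (ball x₀ τ)).toReal -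
        2 * √2 * σ * C / R * (VarWeight V Set.univ).toReal ≤
      σ * ∫ x, ‖h x‖ ∂(VarWeight V) := by
  have hR0 : 0 < R := hτ.trans_le hR
  refine mul_measure_ball_sub_le V hproj hint hcurv contDiff_psi
    (fun q hq => psi_eq_zero hR0.ne' hq) (norm_radialField_psi_le hk hσ x₀)
    (fun q Q hQ0 hQ => ?_) (fun q Q hQ0 hQ hqτ => ?_)
  · have := psi_add_two_mul_deriv_ge hC hk hσ hR0 hQ0 hQ
    linarith [mul_nonneg (phi_nonneg σ k q) (eta_nonneg R q)]
  · have := psi_add_two_mul_deriv_ge hC hk hσ hR0 hQ0 hQ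
    rw [eta_eq_one (hqτ.le.trans (pow_le_pow_left₀ hτ.le hR 2)), mul_one] at this
    linarith [phi_ge (σ := σ) (k := k) (hQ0.trans hQ) hqτ.le]

lemma measure_ball_le (V : Measure (E2 × Mat2)) [IsFiniteMeasure V]
    (hproj : ∀ᵐ p ∂V, IsProj1 p.2) (hint : Integrable h (VarWeight V))
    (hcurv : ∀ g : E2 → E2, C1c g → firstVariation V g = -∫ x, ⟪g x, h x⟫ ∂(VarWeight V))
    (x₀ : E2) {τ : ℝ} (hτ : 0 < τ) :
    (VarWeight V (ball x₀ τ)).toReal ≤ τ * ∫ x, ‖h x‖ ∂(VarWeight V) := by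
  obtain ⟨C, hC⟩ := exists_abs_deriv_smoothTransition_le
  set A := (VarWeight V (ball x₀ τ)).toReal
  set M := (VarWeight V Set.univ).toReal
  set I := ∫ x, ‖h x‖ ∂(VarWeight V)
  have hbound_σk : ∀ σ, τ < σ → ∀ k, k ≠ 0 → (1 + (τ / σ) ^ (4 * k)) ^ (-2 : ℝ) * A ≤ σ * I := by
    intro σ hσ k hk
    have hlim : Tendsto (fun R => σ * I + 2 * √2 * σ * C / R * M) atTop (𝓝 (σ * I)) := by
      simpa using tendsto_const_nhds.add
        ((tendsto_const_nhds.div_atTop tendsto_id).mul_const M)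
    refine ge_of_tendsto hlim ((eventually_ge_atTop τ).mono fun R hR => ?_)
    linarith [mul_measure_ball_sub_le_psi V hproj hint hcurv hC x₀ hτ (hτ.trans hσ) hk hR]
  have hbound_σ : ∀ σ, τ < σ → A ≤ σ * I := by
    intro σ hσ
    have hratio : Tendsto (fun k : ℕ => (τ / σ) ^ (4 * k)) atTop (𝓝 0) := by
      simp only [pow_mul]
      have hτσ : 0 ≤ τ / σ := div_nonneg hτ.le (hτ.trans hσ).le
      exact tendsto_pow_atTop_nhds_zero_of_lt_one (pow_nonneg hτσ 4)
        (pow_lt_one₀ hτσ ((div_lt_one (hτ.trans hσ)).2 hσ) four_ne_zero)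
    have hlim : Tendsto (fun k : ℕ => (1 + (τ / σ) ^ (4 * k)) ^ (-2 : ℝ) * A) atTop (𝓝 A) := by
      simpa using (((tendsto_const_nhds (x := (1 : ℝ))).add hratio).rpow_const (p := -2)
        (Or.inl (by norm_num))).mul_const A
    exact le_of_tendsto hlim ((eventually_ne_atTop 0).mono (hbound_σk σ hσ))
  have hlim : Tendsto (fun σ => σ * I) (𝓝[>] τ) (𝓝 (τ * I)) :=
    (tendsto_id.mul_const I).mono_left nhdsWithin_le_nhds
  exact ge_of_tendsto hlim (eventually_nhdsWithin_of_forall hbound_σ)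

end Limits

lemma integral_le_sqrt_measure_mul_sqrt_integral_sq {α : Type*} [MeasurableSpace α]
    (μ : Measure α) [IsFiniteMeasure μ] {g : α → ℝ} (hg0 : 0 ≤ g) (hg : AEStronglyMeasurable g μ)
    (hg2 : Integrable (fun x => g x ^ 2) μ) :
    ∫ x, g x ∂μ ≤ √(μ Set.univ).toReal * √(∫ x, g x ^ 2 ∂μ) := by
  have hholder := integral_mul_le_Lp_mul_Lq_of_nonneg Real.HolderConjugate.two_two
    (Eventually.of_forall fun _ => zero_le_one) (Eventually.of_forall hg0)
    (memLp_const (1 : ℝ)) (by simpa using (memLp_two_iff_integrable_sq hg).2 hg2)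
  simpa [Real.sqrt_eq_rpow, Measure.real, Real.rpow_two] using hholder

end Varifold1

/-- for a 1-varifold on ℝ² with finite weight, bounded first variation
absolutely continuous w.r.t. the weight and generalized curvature `h`, the
density-ratio supremum is bounded by ‖V‖(ℝ²)^{1/2}·(∫|h|²d‖V‖)^{1/2}. -/
theorem statement1 (V : Measure (E2 × Mat2)) [IsFiniteMeasure V]
    (hproj : ∀ᵐ p ∂V, IsProj1 p.2)
    (h : E2 → E2)
    (hint : Integrable h (VarWeight V))
    (hL2 : Integrable (fun x => ‖h x‖ ^ 2) (VarWeight V))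
    (hcurv : ∀ g : E2 → E2, C1c g →
      firstVariation V g = -∫ x, ⟪g x, h x⟫ ∂(VarWeight V)) :
    Dsup (VarWeight V) ≤
      Real.sqrt ((VarWeight V Set.univ).toReal) *
        Real.sqrt (∫ x, ‖h x‖ ^ 2 ∂(VarWeight V)) ∧
      ∀ (x₀ : E2) (r : ℝ), 0 < r →
        ((VarWeight V) (ball x₀ r)).toReal / r ≤
          Real.sqrt ((VarWeight V Set.univ).toReal) *
            Real.sqrt (∫ x, ‖h x‖ ^ 2 ∂(VarWeight V)) := by
  have hratio : ∀ (x₀ : E2) (r : ℝ), 0 < r →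
      ((VarWeight V) (ball x₀ r)).toReal / r ≤
        Real.sqrt ((VarWeight V Set.univ).toReal) *
          Real.sqrt (∫ x, ‖h x‖ ^ 2 ∂(VarWeight V)) := by
    intro x₀ r hr
    rw [div_le_iff₀ hr, mul_comm _ r]
    exact (Varifold1.measure_ball_le V hproj hint hcurv x₀ hr).trans (mul_le_mul_of_nonneg_left
      (Varifold1.integral_le_sqrt_measure_mul_sqrt_integral_sq _ (fun x => norm_nonneg (h x))
        hint.norm.aestronglyMeasurable hL2) hr.le)
  refine ⟨Real.sSup_le ?_ (by positivity), hratio⟩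
  rintro _ ⟨x₀, r, hr, rfl⟩
  exact hratio x₀ r hr
end
end

section
/- Let T > 0, let u ∈ C¹_c(ℝ²×[0,∞);ℝ²), and let {V_t}_{t∈[0,T]} be a generalized Brakke flow with forcing u. Then for every nonnegative φ ∈ C²_c(ℝ²) there exists a constant C₃ > 0, depending only on ‖φ‖_{C²}, sup_{t∈[0,T]} ‖u(·,t)‖_{L²(ℝ²)}, sup_{t∈[0,T]} ‖V_t‖(ℝ²) and the Meyers–Ziemer constant C_MZ, such that for all 0 ≤ t₁ < t₂ ≤ T: ‖V_{t₂}‖(φ) − ‖V_{t₁}‖(φ) ≤ C₃ · [ (t₂ − t₁) + (1/4)∫_{t₁}^{t₂} ∫_{ℝ²} |h(·,V_t)|² d‖V_t‖ dt + ∫_{t₁}^{t₂} ∫_{ℝ²} |∇u(x,t)|² dx dt ]. In particular, t ↦ ‖V_t‖(φ) − C₃(t + H(t) + U(t)) is non-increasing on [0,T], where H(t) := (1/4)∫₀^t ∫ |h(·,V_s)|² d‖V_s‖ ds and U(t) := ∫₀^t ∫ |∇u|² dx ds. -/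
/-!
Multiplying `φ` by a time cutoff equal to `1` near `[t₁, t₂]` makes it an admissible test
function in Brakke's inequality and kills the `∂ₜ` term. By Cauchy–Schwarz and Young the
remaining integrand satisfies `⟪∇φ - φ h, h + w⟫ ≤ |∇φ|² + |∇φ| |w| + φ |w|² / 4 + |h|² / 4`;
since `|w| ≤ |u|` with `u ∈ C¹_c` bounded and the masses are bounded, integrating gives
`‖V_{t₂}‖(φ) - ‖V_{t₁}‖(φ) ≤ A (t₂ - t₁) + ¼ ∫∫ |h|²` for a constant `A`. The `|∇u|²` term
is nonnegative, and the monotonicity follows from additivity of the time integrals.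
-/

open MeasureTheory Metric Filter
open scoped ENNReal RealInnerProductSpace BigOperators

noncomputable section

/-- `C` is a Meyers–Ziemer constant in dimension 2: for every Radon measure on ℝ²
with finite density-ratio supremum and every `φ ∈ C¹_c(ℝ²)`,
`∫ φ dμ ≤ C · 𝔇(μ) · ∫ |∇φ| dx`. -/
def IsMZConst (C : ℝ) : Prop :=
  ∀ μ : Measure E2, IsLocallyFiniteMeasure μ → BddAbove (ratioSet μ) →
    ∀ φ : E2 → ℝ, ContDiff ℝ 1 φ → HasCompactSupport φ →
      ∫ x, φ x ∂μ ≤ C * Dsup μ * ∫ x, ‖fderiv ℝ φ x‖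

/-- `Du` is the weak (distributional) derivative of `u`: integration by parts
against C¹_c test functions holds in every direction. -/
def HasWeakFDerivV (u : E2 → E2) (Du : E2 → (E2 →L[ℝ] E2)) : Prop :=
  AEStronglyMeasurable u volume ∧ AEStronglyMeasurable Du volume ∧
    ∀ φ : E2 → ℝ, ContDiff ℝ 1 φ → HasCompactSupport φ → ∀ v : E2,
      ∫ x, φ x • Du x v = -∫ x, fderiv ℝ φ x v • u x

/-- `u` belongs to the Sobolev space W^{1,2}(ℝ²;ℝ²), with weak derivative `Du`. -/
def MemW12 (u : E2 → E2) (Du : E2 → (E2 →L[ℝ] E2)) : Prop :=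
  MemLp u 2 volume ∧ MemLp (fun x => ‖Du x‖) 2 volume ∧ HasWeakFDerivV u Du

/-- A time-dependent map belongs to C¹_c(ℝ² × [0,∞)). -/
def C1cSpaceTime {α : Type*} [NormedAddCommGroup α] [NormedSpace ℝ α]
    (u : ℝ → E2 → α) : Prop :=
  ContDiff ℝ 1 (Function.uncurry u) ∧ HasCompactSupport (Function.uncurry u)

/-- `{V t}_{t∈[0,T]}` is a generalized Brakke flow with forcing `u`, with generalized
curvature `h t` and forcing-velocity field `w t` (in the paper, `w = u^⊥`):
(a) for a.e. `t`, `V t` has bounded first variation absolutely continuous with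
respect to its weight, represented by `h t`, with `∫₀ᵀ∫|h|²d‖V_t‖dt < ∞`;
(b) the masses are uniformly bounded on `[0,T]`;
(c) `|w| ≤ |u|` pointwise ‖V_t‖-a.e., and Brakke's inequality holds for every
nonnegative test function `φ ∈ C¹_c(ℝ²×[0,∞))`. -/
structure IsBrakkeFlow (T : ℝ) (u : ℝ → E2 → E2) (V : ℝ → Measure (E2 × Mat2))
    (h w : ℝ → E2 → E2) : Prop where
  varifold : ∀ t ∈ Set.Icc 0 T, ∀ᵐ p ∂(V t), IsProj1 p.2
  finite : ∀ t ∈ Set.Icc 0 T, IsFiniteMeasure (V t)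
  massBdd : ∃ M : ℝ, ∀ t ∈ Set.Icc 0 T, VarWeight (V t) Set.univ ≤ ENNReal.ofReal M
  curv : ∀ᵐ t ∂(volume.restrict (Set.Icc 0 T)),
    Integrable (h t) (VarWeight (V t)) ∧
    Integrable (fun x => ‖h t x‖ ^ 2) (VarWeight (V t)) ∧
    ∀ g : E2 → E2, C1c g →
      firstVariation (V t) g = -∫ x, ⟪g x, h t x⟫ ∂(VarWeight (V t))
  curvL2 : IntegrableOn (fun t => ∫ x, ‖h t x‖ ^ 2 ∂(VarWeight (V t))) (Set.Icc 0 T)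
  wBound : ∀ᵐ t ∂(volume.restrict (Set.Icc 0 T)),
    ∀ᵐ x ∂(VarWeight (V t)), ‖w t x‖ ≤ ‖u t x‖
  brakkeIneq : ∀ t₁ t₂ : ℝ, 0 ≤ t₁ → t₁ ≤ t₂ → t₂ ≤ T →
    ∀ φ : ℝ → E2 → ℝ, C1cSpaceTime φ → (∀ t x, 0 ≤ φ t x) →
      (∫ x, φ t₂ x ∂(VarWeight (V t₂))) - (∫ x, φ t₁ x ∂(VarWeight (V t₁))) ≤
        ∫ t in Set.Icc t₁ t₂,
          ((∫ x, deriv (fun s => φ s x) t ∂(VarWeight (V t))) +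
            ∫ x, ⟪gradient (φ t) x - φ t x • h t x, h t x + w t x⟫
              ∂(VarWeight (V t)))

open scoped ContDiff Topology

theorem real_inner_sub_smul_add_le {F : Type*} [NormedAddCommGroup F] [InnerProductSpace ℝ F]
    (g h w : F) {p : ℝ} (hp : 0 ≤ p) :
    ⟪g - p • h, h + w⟫ ≤ ‖g‖ ^ 2 + ‖g‖ * ‖w‖ + p * ‖w‖ ^ 2 / 4 + ‖h‖ ^ 2 / 4 := by
  have hgh : ⟪g, h⟫ ≤ ‖g‖ * ‖h‖ := real_inner_le_norm g h
  have hgw : ⟪g, w⟫ ≤ ‖g‖ * ‖w‖ := real_inner_le_norm g w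
  have hhw : -⟪h, w⟫ ≤ ‖h‖ * ‖w‖ := (neg_le_abs _).trans (abs_real_inner_le_norm h w)
  have expand : ⟪g - p • h, h + w⟫ = ⟪g, h⟫ + ⟪g, w⟫ - p * ‖h‖ ^ 2 - p * ⟪h, w⟫ := by
    rw [inner_sub_left, inner_add_right, inner_add_right, real_inner_smul_left,
      real_inner_smul_left, real_inner_self_eq_norm_sq]
    ring
  rw [expand]
  nlinarith [sq_nonneg (‖g‖ - ‖h‖ / 2), mul_nonneg hp (sq_nonneg (‖h‖ - ‖w‖ / 2)),
    mul_le_mul_of_nonneg_left hhw hp]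

theorem integral_le_of_ae_le_of_nonneg {α : Type*} [MeasurableSpace α] {μ : Measure α}
    {f g : α → ℝ} (hg : Integrable g μ) (hg0 : 0 ≤ᵐ[μ] g) (hfg : f ≤ᵐ[μ] g) :
    ∫ x, f x ∂μ ≤ ∫ x, g x ∂μ := by
  by_cases hf : Integrable f μ
  · exact integral_mono_ae hf hg hfg
  · rw [integral_undef hf]
    exact integral_nonneg_of_ae hg0

theorem integral_inner_sub_smul_add_le {α F : Type*} [MeasurableSpace α]
    [NormedAddCommGroup F] [InnerProductSpace ℝ F] {μ : Measure α} [IsFiniteMeasure μ]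
    {g h w : α → F} {p : α → ℝ} {G U P M : ℝ} (hG0 : 0 ≤ G) (hU0 : 0 ≤ U) (hP0 : 0 ≤ P)
    (hg : ∀ x, ‖g x‖ ≤ G) (hw : ∀ᵐ x ∂μ, ‖w x‖ ≤ U) (hp : ∀ x, 0 ≤ p x) (hpP : ∀ x, p x ≤ P)
    (hh : Integrable (fun x => ‖h x‖ ^ 2) μ) (hM : μ.real Set.univ ≤ M) :
    ∫ x, ⟪g x - p x • h x, h x + w x⟫ ∂μ ≤
      (G ^ 2 + G * U + P * U ^ 2 / 4) * M + (∫ x, ‖h x‖ ^ 2 ∂μ) / 4 := by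
  have hpt : ∀ᵐ x ∂μ, ⟪g x - p x • h x, h x + w x⟫ ≤
      (G ^ 2 + G * U + P * U ^ 2 / 4) + ‖h x‖ ^ 2 / 4 := by
    filter_upwards [hw] with x hwx
    refine (real_inner_sub_smul_add_le _ _ _ (hp x)).trans ?_
    have hgx := hg x
    have hpx := hpP x
    gcongr
  set a := G ^ 2 + G * U + P * U ^ 2 / 4
  have ha : 0 ≤ a := by positivity
  calc ∫ x, ⟪g x - p x • h x, h x + w x⟫ ∂μ ≤ ∫ x, (a + ‖h x‖ ^ 2 / 4) ∂μ :=
        integral_le_of_ae_le_of_nonneg ((integrable_const a).add (hh.div_const 4))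
          (ae_of_all _ fun x => by positivity) hpt
    _ = a * μ.real Set.univ + (∫ x, ‖h x‖ ^ 2 ∂μ) / 4 := by
        rw [integral_add (integrable_const a) (hh.div_const 4), integral_const, integral_div,
          smul_eq_mul, mul_comm]
    _ ≤ a * M + (∫ x, ‖h x‖ ^ 2 ∂μ) / 4 := by gcongr

theorem exists_contDiff_hasCompactSupport_eventuallyEq_one {E : Type*} [NormedAddCommGroup E]
    [NormedSpace ℝ E] [FiniteDimensional ℝ E] {K : Set E} (hK : IsCompact K) :
    ∃ χ : E → ℝ, ContDiff ℝ ∞ χ ∧ HasCompactSupport χ ∧ (∀ x, 0 ≤ χ x) ∧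
      ∀ x ∈ K, χ =ᶠ[𝓝 x] 1 := by
  obtain ⟨R, hR, hKR⟩ := hK.isBounded.subset_ball_lt 0 (0 : E)
  let χ : ContDiffBump (0 : E) := ⟨R, R + 1, hR, by linarith⟩
  exact ⟨χ, χ.contDiff, χ.hasCompactSupport, fun _ => χ.nonneg,
    fun x hx => χ.eventuallyEq_one_of_mem_ball (hKR hx)⟩

theorem c1cSpaceTime_mul {χ : ℝ → ℝ} {φ : E2 → ℝ} (hχ : ContDiff ℝ 1 χ)
    (hχc : HasCompactSupport χ) (hφ : ContDiff ℝ 1 φ) (hφc : HasCompactSupport φ) :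
    C1cSpaceTime fun s x => χ s * φ x := by
  refine ⟨(hχ.comp contDiff_fst).mul (hφ.comp contDiff_snd),
    HasCompactSupport.intro' (hχc.prod hφc) ((isClosed_tsupport χ).prod (isClosed_tsupport φ))
      fun p hp => ?_⟩
  rcases not_and_or.1 (Set.mem_prod.not.1 hp) with hp | hp <;>
    simp [Function.uncurry, image_eq_zero_of_notMem_tsupport hp]

theorem continuous_integral_of_hasCompactSupport {X Y E : Type*} [TopologicalSpace X]
    [FirstCountableTopology X] [LocallyCompactSpace X] [TopologicalSpace Y] [MeasurableSpace Y]
    [OpensMeasurableSpace Y] [NormedAddCommGroup E] [NormedSpace ℝ E]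
    [SecondCountableTopologyEither Y E] {μ : Measure Y} [IsLocallyFiniteMeasure μ]
    {f : X → Y → E} (hf : Continuous f.uncurry) (hfc : HasCompactSupport f.uncurry) :
    Continuous fun x => ∫ y, f x y ∂μ := by
  have hrestrict : (fun x => ∫ y, f x y ∂μ) =
      fun x => ∫ y in Prod.snd '' tsupport f.uncurry, f x y ∂μ := by
    refine funext fun x => (setIntegral_eq_integral_of_forall_compl_eq_zero fun y hy => ?_).symm
    by_contra hne
    exact hy ⟨(x, y), subset_tsupport _ hne, rfl⟩
  rw [hrestrict]
  exact continuous_parametric_integral_of_continuous hf (hfc.image continuous_snd)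

theorem C1cSpaceTime.continuous_integral_norm_fderiv_sq {α : Type*} [NormedAddCommGroup α]
    [NormedSpace ℝ α] {u : ℝ → E2 → α} (hu : C1cSpaceTime u) :
    Continuous fun t => ∫ x, ‖fderiv ℝ (u t) x‖ ^ 2 := by
  refine continuous_integral_of_hasCompactSupport (f := fun t x => ‖fderiv ℝ (u t) x‖ ^ 2)
    ?_ (hu.2.mono' fun p hp => ?_)
  · have hDu : Continuous fun p : ℝ × E2 => fderiv ℝ (u p.1) p.2 :=
      (ContDiff.fderiv (f := fun p : ℝ × E2 => u p.1)
        (hu.1.comp ((contDiff_fst.comp contDiff_fst).prodMk contDiff_snd))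
        (contDiff_snd (n := 0)) (by norm_num)).continuous
    exact hDu.norm.pow 2
  · have hx : p.2 ∈ tsupport (u p.1) :=
      support_fderiv_subset ℝ (by simpa [Function.uncurry] using hp)
    exact tsupport_comp_subset_preimage (Function.uncurry u) (f := fun x => (p.1, x))
      (by fun_prop) hx

theorem setIntegral_Icc_add_setIntegral_Icc {E : Type*} [NormedAddCommGroup E]
    [NormedSpace ℝ E] {f : ℝ → E} {a b c : ℝ} (hab : a ≤ b) (hbc : b ≤ c)
    (hf : IntegrableOn f (Set.Icc a c)) :
    (∫ t in Set.Icc a b, f t) + ∫ t in Set.Icc b c, f t = ∫ t in Set.Icc a c, f t := by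
  simp only [integral_Icc_eq_integral_Ioc, ← intervalIntegral.integral_of_le hab,
    ← intervalIntegral.integral_of_le hbc, ← intervalIntegral.integral_of_le (hab.trans hbc)]
  refine intervalIntegral.integral_add_adjacent_intervals ?_ ?_
  · exact (hf.mono_set (by simp [Set.uIcc_of_le hab, Set.Icc_subset_Icc_right hbc]))
      |>.intervalIntegrable
  · exact (hf.mono_set (by simp [Set.uIcc_of_le hbc, Set.Icc_subset_Icc_left hab]))
      |>.intervalIntegrable

namespace IsBrakkeFlow

variable {T : ℝ} {u : ℝ → E2 → E2} {V : ℝ → Measure (E2 × Mat2)} {h w : ℝ → E2 → E2}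

theorem brakkeIneq_of_timeIndependent (hF : IsBrakkeFlow T u V h w) {φ : E2 → ℝ}
    (hφ : ContDiff ℝ 1 φ) (hφc : HasCompactSupport φ) (hφ0 : ∀ x, 0 ≤ φ x) {t₁ t₂ : ℝ}
    (ht₁ : 0 ≤ t₁) (h12 : t₁ ≤ t₂) (ht₂ : t₂ ≤ T) :
    (∫ x, φ x ∂(VarWeight (V t₂))) - (∫ x, φ x ∂(VarWeight (V t₁))) ≤
      ∫ t in Set.Icc t₁ t₂, ∫ x, ⟪gradient φ x - φ x • h t x, h t x + w t x⟫
        ∂(VarWeight (V t)) := by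
  obtain ⟨χ, hχ, hχc, hχ0, hχ1⟩ :=
    exists_contDiff_hasCompactSupport_eventuallyEq_one (isCompact_Icc (a := t₁) (b := t₂))
  have hone : ∀ t ∈ Set.Icc t₁ t₂, χ t = 1 := fun t ht => (hχ1 t ht).eq_of_nhds
  have key := hF.brakkeIneq t₁ t₂ ht₁ h12 ht₂ (fun s x => χ s * φ x)
    (c1cSpaceTime_mul (hχ.of_le (by exact_mod_cast le_top)) hχc hφ hφc)
    fun s x => mul_nonneg (hχ0 s) (hφ0 x)
  simp only [hone t₁ ⟨le_rfl, h12⟩, hone t₂ ⟨h12, le_rfl⟩, one_mul] at key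
  refine key.trans_eq (setIntegral_congr_fun measurableSet_Icc fun t ht => ?_)
  have hderiv : ∀ x, deriv (fun s => χ s * φ x) t = 0 := fun x => by
    have hconst : (fun s => χ s * φ x) =ᶠ[𝓝 t] fun _ => φ x :=
      (hχ1 t ht).mono fun s hs => by simp [hs]
    rw [hconst.deriv_eq, deriv_const]
  simp only [hderiv, hone t ht, one_mul, integral_zero, zero_add]

theorem exists_integral_sub_le (hF : IsBrakkeFlow T u V h w) {U : ℝ}
    (hU : ∀ t x, ‖u t x‖ ≤ U) {φ : E2 → ℝ} (hφ : ContDiff ℝ 1 φ) (hφc : HasCompactSupport φ)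
    (hφ0 : ∀ x, 0 ≤ φ x) :
    ∃ A, 0 ≤ A ∧ ∀ t₁ t₂ : ℝ, 0 ≤ t₁ → t₁ ≤ t₂ → t₂ ≤ T →
      (∫ x, φ x ∂(VarWeight (V t₂))) - (∫ x, φ x ∂(VarWeight (V t₁))) ≤
        A * (t₂ - t₁) + (∫ t in Set.Icc t₁ t₂, ∫ x, ‖h t x‖ ^ 2 ∂(VarWeight (V t))) / 4 := by
  obtain ⟨G, hG⟩ := (hφc.fderiv (𝕜 := ℝ)).exists_bound_of_continuous
    (hφ.continuous_fderiv one_ne_zero)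
  obtain ⟨P, hP⟩ := hφc.exists_bound_of_continuous hφ.continuous
  obtain ⟨M, hM⟩ := hF.massBdd
  have hG0 : 0 ≤ G := (norm_nonneg _).trans (hG 0)
  have hP0 : 0 ≤ P := (norm_nonneg _).trans (hP 0)
  have hU0 : 0 ≤ U := (norm_nonneg _).trans (hU 0 0)
  have hgrad : ∀ x, ‖gradient φ x‖ ≤ G := fun x =>
    ((InnerProductSpace.toDual ℝ E2).symm.norm_map (fderiv ℝ φ x)).trans_le (hG x)
  have hφP : ∀ x, φ x ≤ P := fun x => (le_abs_self _).trans (hP x)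
  set A := (G ^ 2 + G * U + P * U ^ 2 / 4) * max M 0
  refine ⟨A, by positivity, fun t₁ t₂ ht₁ h12 ht₂ => ?_⟩
  have hsub : Set.Icc t₁ t₂ ⊆ Set.Icc 0 T := Set.Icc_subset_Icc ht₁ ht₂
  have hH : IntegrableOn (fun t => ∫ x, ‖h t x‖ ^ 2 ∂(VarWeight (V t))) (Set.Icc t₁ t₂) :=
    hF.curvL2.mono_set hsub
  have hAint : IntegrableOn (fun _ => A) (Set.Icc t₁ t₂) :=
    integrableOn_const measure_Icc_lt_top.ne
  have hpt : ∀ᵐ t ∂(volume.restrict (Set.Icc t₁ t₂)),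
      ∫ x, ⟪gradient φ x - φ x • h t x, h t x + w t x⟫ ∂(VarWeight (V t)) ≤
        A + (∫ x, ‖h t x‖ ^ 2 ∂(VarWeight (V t))) / 4 := by
    filter_upwards [ae_restrict_of_ae_restrict_of_subset hsub hF.curv,
      ae_restrict_of_ae_restrict_of_subset hsub hF.wBound, ae_restrict_mem measurableSet_Icc]
      with t hcurv hw ht
    have := hF.finite t (hsub ht)
    have : IsFiniteMeasure (VarWeight (V t)) := Measure.isFiniteMeasure_map _ _
    have hmass : (VarWeight (V t)).real Set.univ ≤ max M 0 :=
      ENNReal.toReal_le_of_le_ofReal (le_max_right _ _)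
        ((hM t (hsub ht)).trans (ENNReal.ofReal_le_ofReal (le_max_left _ _)))
    exact integral_inner_sub_smul_add_le hG0 hU0 hP0 hgrad
      (hw.mono fun x hx => hx.trans (hU t x)) hφ0 hφP hcurv.2.1 hmass
  calc (∫ x, φ x ∂(VarWeight (V t₂))) - (∫ x, φ x ∂(VarWeight (V t₁)))
      ≤ ∫ t in Set.Icc t₁ t₂, ∫ x, ⟪gradient φ x - φ x • h t x, h t x + w t x⟫
          ∂(VarWeight (V t)) := hF.brakkeIneq_of_timeIndependent hφ hφc hφ0 ht₁ h12 ht₂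
    _ ≤ ∫ t in Set.Icc t₁ t₂, (A + (∫ x, ‖h t x‖ ^ 2 ∂(VarWeight (V t))) / 4) :=
        integral_le_of_ae_le_of_nonneg (hAint.add (hH.div_const 4))
          (ae_of_all _ fun t => by positivity) hpt
    _ = A * (t₂ - t₁) + (∫ t in Set.Icc t₁ t₂, ∫ x, ‖h t x‖ ^ 2 ∂(VarWeight (V t))) / 4 := by
        rw [integral_add hAint (hH.div_const 4), setIntegral_const, integral_div,
          Real.volume_real_Icc_of_le h12, smul_eq_mul, mul_comm]

end IsBrakkeFlow

theorem statement12_general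
    (T : ℝ) (u : ℝ → E2 → E2) (hu : C1cSpaceTime u)
    (V : ℝ → Measure (E2 × Mat2)) (h w : ℝ → E2 → E2)
    (hF : IsBrakkeFlow T u V h w)
    (φ : E2 → ℝ) (hφ : ContDiff ℝ 2 φ) (hφc : HasCompactSupport φ)
    (hφ0 : ∀ x, 0 ≤ φ x) :
    ∃ C₃ : ℝ, 0 < C₃ ∧
      (∀ t₁ t₂ : ℝ, 0 ≤ t₁ → t₁ < t₂ → t₂ ≤ T →
        (∫ x, φ x ∂(VarWeight (V t₂))) - (∫ x, φ x ∂(VarWeight (V t₁))) ≤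
          C₃ * ((t₂ - t₁) +
            (1 / 4) * (∫ t in Set.Icc t₁ t₂, ∫ x, ‖h t x‖ ^ 2 ∂(VarWeight (V t))) +
            ∫ t in Set.Icc t₁ t₂, ∫ x, ‖fderiv ℝ (u t) x‖ ^ 2)) ∧
      (∀ t₁ t₂ : ℝ, 0 ≤ t₁ → t₁ ≤ t₂ → t₂ ≤ T →
        (∫ x, φ x ∂(VarWeight (V t₂))) -
            C₃ * (t₂ +
              (1 / 4) * (∫ s in Set.Icc 0 t₂, ∫ x, ‖h s x‖ ^ 2 ∂(VarWeight (V s))) +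
              ∫ s in Set.Icc 0 t₂, ∫ x, ‖fderiv ℝ (u s) x‖ ^ 2) ≤
          (∫ x, φ x ∂(VarWeight (V t₁))) -
            C₃ * (t₁ +
              (1 / 4) * (∫ s in Set.Icc 0 t₁, ∫ x, ‖h s x‖ ^ 2 ∂(VarWeight (V s))) +
              ∫ s in Set.Icc 0 t₁, ∫ x, ‖fderiv ℝ (u s) x‖ ^ 2)) := by
  obtain ⟨U, hU⟩ := hu.2.exists_bound_of_continuous hu.1.continuous
  obtain ⟨A, hA0, hA⟩ :=
    hF.exists_integral_sub_le (fun t x => hU (t, x)) (hφ.of_le one_le_two) hφc hφ0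
  set H := fun t => ∫ x, ‖h t x‖ ^ 2 ∂(VarWeight (V t))
  set J := fun t => ∫ x, ‖fderiv ℝ (u t) x‖ ^ 2
  have hle : ∀ t₁ t₂ : ℝ, 0 ≤ t₁ → t₁ ≤ t₂ → t₂ ≤ T →
      (∫ x, φ x ∂(VarWeight (V t₂))) - (∫ x, φ x ∂(VarWeight (V t₁))) ≤
        max A 1 * ((t₂ - t₁) + (1 / 4) * (∫ t in Set.Icc t₁ t₂, H t) +
          ∫ t in Set.Icc t₁ t₂, J t) := by
    intro t₁ t₂ ht₁ h12 ht₂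
    have hH0 : 0 ≤ ∫ t in Set.Icc t₁ t₂, H t :=
      setIntegral_nonneg measurableSet_Icc fun t _ => integral_nonneg fun x => by positivity
    have hJ0 : 0 ≤ ∫ t in Set.Icc t₁ t₂, J t :=
      setIntegral_nonneg measurableSet_Icc fun t _ => integral_nonneg fun x => by positivity
    have hAt : A * (t₂ - t₁) ≤ max A 1 * (t₂ - t₁) :=
      mul_le_mul_of_nonneg_right (le_max_left _ _) (sub_nonneg.2 h12)
    have hAH : (1 / 4) * (∫ t in Set.Icc t₁ t₂, H t) ≤
        max A 1 * ((1 / 4) * ∫ t in Set.Icc t₁ t₂, H t) :=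
      le_mul_of_one_le_left (by positivity) (le_max_right _ _)
    have hAJ : 0 ≤ max A 1 * ∫ t in Set.Icc t₁ t₂, J t := by positivity
    linarith [hA t₁ t₂ ht₁ h12 ht₂]
  refine ⟨max A 1, by positivity, fun t₁ t₂ ht₁ h12 ht₂ => hle t₁ t₂ ht₁ h12.le ht₂,
    fun t₁ t₂ ht₁ h12 ht₂ => ?_⟩
  have hH := hF.curvL2.mono_set (Set.Icc_subset_Icc_right ht₂)
  have hJ :=
    hu.continuous_integral_norm_fderiv_sq.integrableOn_Icc (μ := volume) (a := 0) (b := t₂)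
  rw [← setIntegral_Icc_add_setIntegral_Icc ht₁ h12 hH,
    ← setIntegral_Icc_add_setIntegral_Icc ht₁ h12 hJ]
  linarith [hle t₁ t₂ ht₁ h12 ht₂]

/-- almost-monotonicity of localized mass along a generalized Brakke
flow with forcing `u ∈ C¹_c`: for every nonnegative `φ ∈ C²_c(ℝ²)` there is
`C₃ > 0` with
`‖V_{t₂}‖(φ) − ‖V_{t₁}‖(φ) ≤ C₃[(t₂−t₁) + ¼∫_{t₁}^{t₂}∫|h|²d‖V_t‖dt + ∫_{t₁}^{t₂}∫|∇u|²dxdt]`;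
in particular `t ↦ ‖V_t‖(φ) − C₃(t + H(t) + U(t))` is non-increasing on `[0,T]`. -/
theorem statement12 (C : ℝ) (hC : 0 < C) (hMZ : IsMZConst C)
    (T : ℝ) (hT : 0 < T) (u : ℝ → E2 → E2) (hu : C1cSpaceTime u)
    (V : ℝ → Measure (E2 × Mat2)) (h w : ℝ → E2 → E2)
    (hF : IsBrakkeFlow T u V h w)
    (φ : E2 → ℝ) (hφ : ContDiff ℝ 2 φ) (hφc : HasCompactSupport φ)
    (hφ0 : ∀ x, 0 ≤ φ x) :
    ∃ C₃ : ℝ, 0 < C₃ ∧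
      (∀ t₁ t₂ : ℝ, 0 ≤ t₁ → t₁ < t₂ → t₂ ≤ T →
        (∫ x, φ x ∂(VarWeight (V t₂))) - (∫ x, φ x ∂(VarWeight (V t₁))) ≤
          C₃ * ((t₂ - t₁) +
            (1 / 4) * (∫ t in Set.Icc t₁ t₂, ∫ x, ‖h t x‖ ^ 2 ∂(VarWeight (V t))) +
            ∫ t in Set.Icc t₁ t₂, ∫ x, ‖fderiv ℝ (u t) x‖ ^ 2)) ∧
      (∀ t₁ t₂ : ℝ, 0 ≤ t₁ → t₁ ≤ t₂ → t₂ ≤ T →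
        (∫ x, φ x ∂(VarWeight (V t₂))) -
            C₃ * (t₂ +
              (1 / 4) * (∫ s in Set.Icc 0 t₂, ∫ x, ‖h s x‖ ^ 2 ∂(VarWeight (V s))) +
              ∫ s in Set.Icc 0 t₂, ∫ x, ‖fderiv ℝ (u s) x‖ ^ 2) ≤
          (∫ x, φ x ∂(VarWeight (V t₁))) -
            C₃ * (t₁ +
              (1 / 4) * (∫ s in Set.Icc 0 t₁, ∫ x, ‖h s x‖ ^ 2 ∂(VarWeight (V s))) +
              ∫ s in Set.Icc 0 t₁, ∫ x, ‖fderiv ℝ (u s) x‖ ^ 2)) :=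
  statement12_general T u hu V h w hF φ hφ hφc hφ0
end
end
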